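/- arXiv:2312.08100 — 5 statements merged into one kernel-verified Lean document; each statement's English description precedes it below -/
import Mathlib

section
/- There exists an absolute constant C > 0 such that for every natural number n, if A ⊆ 𝔽₃ⁿ is a cap set (i.e., A contains no triple x, x+d, x+2d with d ≠ 0), then |A| ≤ C · 2.838ⁿ. -/
/-!
The polynomial method of Croot–Lev–Pach and Ellenberg–Gijswijt. Let `T = {a + a | a ∈ A}` and let
`P_d` be the space of polynomial functions on `𝔽_qⁿ` of degree `≤ d`. Functions in `P_d` vanishing
off `T` form a space of dimension at least `|A| - #{reduced monomials of degree > d}`, and such a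
space contains a function whose support is at least as large as its dimension. For `f ∈ P_{2e+1}`,
expanding `f (x + y)` shows that every monomial has degree `≤ e` in `x` or in `y`, so the matrix
`(f (a + b))_{a, b ∈ A}` has rank at most `2 m_e`, where `m_e` counts reduced monomials of degree
`≤ e`. If `A` has no three-term progression and `f` vanishes off `T`, this matrix is diagonal with
`f (a + a)` on the diagonal, so its rank is at least the size of the support of `f`. Over `𝔽₃` with
`e = ⌊2n/3⌋`, the count of reduced monomials of degree `> 2e + 1` is also at most `m_e` (by
`α ↦ 2 - α`), and `m_e ≤ (49/25)ⁿ (5/3)^e ≤ 2.838ⁿ`.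
-/

open Finset Submodule Module

variable {K : Type*}

section PolyFun

variable [CommRing K] {n : ℕ}

def monomialFun (β : Fin n → ℕ) (x : Fin n → K) : K := ∏ i, x i ^ β i

variable (K n) in
def polyFun (d : ℕ) : Submodule K ((Fin n → K) → K) :=
  span K (monomialFun '' {β | ∑ i, β i ≤ d})

def reducedMonomialFun {q : ℕ} (α : Fin n → Fin q) : (Fin n → K) → K :=
  monomialFun fun i => α i

lemma monomialFun_mem_polyFun {β : Fin n → ℕ} {d : ℕ} (h : ∑ i, β i ≤ d) :
    monomialFun β ∈ polyFun K n d :=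
  subset_span ⟨β, h, rfl⟩

lemma monomialFun_add (β γ : Fin n → ℕ) :
    (monomialFun (β + γ) : (Fin n → K) → K) = monomialFun β * monomialFun γ := by
  funext x
  simp [monomialFun, pow_add, prod_mul_distrib]

lemma one_mem_polyFun {d : ℕ} : (1 : (Fin n → K) → K) ∈ polyFun K n d := by
  have : (monomialFun 0 : (Fin n → K) → K) = 1 := by
    funext x; simp [monomialFun]
  exact this ▸ monomialFun_mem_polyFun (by simp)

lemma mul_mem_polyFun {f g : (Fin n → K) → K} {a b : ℕ} (hf : f ∈ polyFun K n a)
    (hg : g ∈ polyFun K n b) : f * g ∈ polyFun K n (a + b) := by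
  refine (?_ : polyFun K n a * polyFun K n b ≤ _) (mul_mem_mul hf hg)
  rw [polyFun, polyFun, span_mul_span, span_le]
  rintro _ ⟨_, ⟨β, hβ, rfl⟩, _, ⟨γ, hγ, rfl⟩, rfl⟩
  show monomialFun β * monomialFun γ ∈ _
  rw [← monomialFun_add]
  exact monomialFun_mem_polyFun ((sum_add_distrib).trans_le (Nat.add_le_add hβ hγ))

lemma pow_mem_polyFun {f : (Fin n → K) → K} {d : ℕ} (hf : f ∈ polyFun K n d) (k : ℕ) :
    f ^ k ∈ polyFun K n (k * d) := by
  induction k with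
  | zero => simpa using one_mem_polyFun
  | succ k ih => simpa [pow_succ, add_mul] using mul_mem_polyFun ih hf

lemma prod_mem_polyFun {ι : Type*} (s : Finset ι) {f : ι → (Fin n → K) → K} {d : ℕ}
    (hf : ∀ i ∈ s, f i ∈ polyFun K n d) : ∏ i ∈ s, f i ∈ polyFun K n (#s * d) := by
  classical
  induction s using Finset.induction_on with
  | empty => simpa using one_mem_polyFun
  | insert j s hj ih =>
    rw [prod_insert hj, card_insert_of_notMem hj, add_mul, one_mul, add_comm _ d]
    exact mul_mem_polyFun (hf j (mem_insert_self j s))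
      (ih fun i hi => hf i (mem_insert_of_mem hi))

lemma const_mem_polyFun (c : K) {d : ℕ} : (fun _ => c) ∈ polyFun K n d := by
  have : (fun _ => c : (Fin n → K) → K) = c • 1 := by
    funext x; simp
  exact this ▸ smul_mem _ c one_mem_polyFun

lemma apply_mem_polyFun (j : Fin n) : (fun x => x j) ∈ polyFun K n 1 := by
  have : (fun x => x j : (Fin n → K) → K) = monomialFun (Pi.single j 1) := by
    funext x; simp [monomialFun, Pi.single_apply, pow_ite]
  exact this ▸ monomialFun_mem_polyFun (by simp)

lemma monomialFun_add_apply (β : Fin n → ℕ) (x y : Fin n → K) :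
    monomialFun β (x + y) = ∑ γ ∈ Fintype.piFinset fun i => range (β i + 1),
      (∏ i, ((β i).choose (γ i) : K)) * monomialFun γ x * monomialFun (β - γ) y := by
  simp only [monomialFun, Pi.add_apply, add_pow, prod_univ_sum, Pi.sub_apply]
  refine sum_congr rfl fun γ _ => ?_
  simp only [prod_mul_distrib]
  ring

instance (d : ℕ) : Module.Finite K (polyFun K n d) := by
  refine Module.Finite.span_of_finite K (Set.Finite.image _ ?_)
  refine (Set.Finite.pi (t := fun _ : Fin n => Set.Iic d) fun _ => Set.finite_Iic d).subset ?_
  intro β hβ i _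
  exact (single_le_sum (fun j _ => Nat.zero_le (β j)) (mem_univ i)).trans hβ

variable (K n) in
def polyFunFst (e : ℕ) : Submodule K ((Fin n → K) → (Fin n → K) → K) where
  carrier := {F | ∀ y, (fun x => F x y) ∈ polyFun K n e}
  add_mem' hF hG y := add_mem (hF y) (hG y)
  zero_mem' _ := zero_mem _
  smul_mem' c _ hF y := smul_mem _ c (hF y)

variable (K n) in
def polyFunSnd (e : ℕ) : Submodule K ((Fin n → K) → (Fin n → K) → K) where
  carrier := {F | ∀ x, F x ∈ polyFun K n e}
  add_mem' hF hG x := add_mem (hF x) (hG x)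
  zero_mem' _ := zero_mem _
  smul_mem' c _ hF x := smul_mem _ c (hF x)

lemma monomialFun_mul_monomialFun_mem_polyFunFst_sup_polyFunSnd (c : K) {γ δ : Fin n → ℕ}
    {e : ℕ} (h : ∑ i, γ i ≤ e ∨ ∑ i, δ i ≤ e) :
    (fun x y => c * monomialFun γ x * monomialFun δ y) ∈
      polyFunFst K n e ⊔ polyFunSnd K n e := by
  rcases h with hγ | hδ
  · refine mem_sup_left fun y => ?_
    convert smul_mem _ (c * monomialFun δ y) (monomialFun_mem_polyFun (K := K) hγ) using 1
    funext x
    simp only [Pi.smul_apply, smul_eq_mul]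
    ring
  · refine mem_sup_right fun x => ?_
    convert smul_mem _ (c * monomialFun γ x) (monomialFun_mem_polyFun (K := K) hδ) using 1
    funext y
    simp only [Pi.smul_apply, smul_eq_mul]

lemma add_apply_mem_polyFunFst_sup_polyFunSnd {f : (Fin n → K) → K} {e : ℕ}
    (hf : f ∈ polyFun K n (2 * e + 1)) :
    (fun x y => f (x + y)) ∈ polyFunFst K n e ⊔ polyFunSnd K n e := by
  induction hf using span_induction with
  | mem _ hβ =>
    obtain ⟨β, hβ, rfl⟩ := hβ
    have hsum : (fun x y => monomialFun β (x + y)) =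
        ∑ γ ∈ Fintype.piFinset fun i => range (β i + 1), fun x y =>
          (∏ i, ((β i).choose (γ i) : K)) * monomialFun γ x * monomialFun (β - γ) y := by
      funext x y
      simp only [monomialFun_add_apply, Finset.sum_apply]
    rw [hsum]
    refine sum_mem fun γ hγ => monomialFun_mul_monomialFun_mem_polyFunFst_sup_polyFunSnd _ ?_
    have hγβ : ∀ i, γ i ≤ β i := fun i =>
      Nat.lt_succ_iff.mp (mem_range.mp (Fintype.mem_piFinset.mp hγ i))
    have hdeg : ∑ i, γ i + ∑ i, (β - γ) i = ∑ i, β i := by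
      rw [← sum_add_distrib]
      exact sum_congr rfl fun i _ => Nat.add_sub_cancel' (hγβ i)
    have hβ' : ∑ i, β i ≤ 2 * e + 1 := hβ
    omega
  | zero => exact zero_mem _
  | add _ _ _ _ hf hg => exact add_mem hf hg
  | smul c _ _ hf => exact smul_mem _ c hf

end PolyFun

section LinearAlgebra

variable [Field K] {ι κ : Type*} [Fintype ι] [Fintype κ]

lemma Matrix.rank_le_finrank_of_forall_col_mem (M : Matrix ι κ K) (W : Submodule K (ι → K))
    (h : ∀ j, (fun i => M i j) ∈ W) : M.rank ≤ finrank K W := by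
  rw [M.rank_eq_finrank_span_cols]
  exact finrank_mono (span_le.mpr (Set.range_subset_iff.mpr h))

lemma Matrix.rank_add_le (M N : Matrix ι κ K) : (M + N).rank ≤ M.rank + N.rank := by
  rw [Matrix.rank_eq_finrank_span_cols, M.rank_eq_finrank_span_cols,
    N.rank_eq_finrank_span_cols]
  refine (finrank_mono ?_).trans (finrank_add_le_finrank_add_finrank _ _)
  rw [span_le]
  rintro _ ⟨j, rfl⟩
  exact add_mem_sup (subset_span ⟨j, rfl⟩) (subset_span ⟨j, rfl⟩)

lemma Submodule.exists_ne_zero_forall_eq_zero (W : Submodule K (ι → K)) (s : Finset ι)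
    (h : #s < finrank K W) : ∃ g ∈ W, g ≠ 0 ∧ ∀ x ∈ s, g x = 0 := by
  let ρ := (LinearMap.funLeft K K ((↑) : s → ι)).domRestrict W
  have hker : LinearMap.ker ρ ≠ ⊥ :=
    LinearMap.ker_ne_bot_of_finrank_lt (by simpa [finrank_fintype_fun_eq_card] using h)
  obtain ⟨⟨g, hgW⟩, hg, hg0⟩ := exists_mem_ne_zero_of_ne_bot hker
  exact ⟨g, hgW, fun h => hg0 (Subtype.ext h), fun x hx => congr_fun hg ⟨x, hx⟩⟩

lemma Submodule.exists_mem_finrank_le_card_add_card_support [DecidableEq K]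
    (W : Submodule K (ι → K)) (s : Finset ι) :
    ∃ f ∈ W, (∀ x ∈ s, f x = 0) ∧ finrank K W ≤ #s + #{x | f x ≠ 0} := by
  classical
  suffices h : ∀ k, k + #s ≤ finrank K W →
      ∃ f ∈ W, (∀ x ∈ s, f x = 0) ∧ k ≤ #{x | f x ≠ 0} by
    by_cases hs : #s ≤ finrank K W
    · obtain ⟨f, hfW, hfs, hk⟩ := h (finrank K W - #s) (by omega)
      exact ⟨f, hfW, hfs, by omega⟩
    · exact ⟨0, zero_mem _, fun _ _ => rfl, by omega⟩
  intro k hk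
  induction k with
  | zero => exact ⟨0, zero_mem _, fun _ _ => rfl, Nat.zero_le _⟩
  | succ k ih =>
    obtain ⟨f, hfW, hfs, hfk⟩ := ih (by omega)
    by_cases hlarge : k + 1 ≤ #{x | f x ≠ 0}
    · exact ⟨f, hfW, hfs, hlarge⟩
    -- a nonzero `g ∈ W` vanishing on `s` and on the support of `f` enlarges that support
    obtain ⟨g, hgW, hg0, hgs⟩ :=
      W.exists_ne_zero_forall_eq_zero (s ∪ ({x | f x ≠ 0} : Finset ι))
        ((card_union_le _ _).trans_lt (by omega))
    obtain ⟨x₀, hx₀⟩ := Function.ne_iff.mp hg0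
    have hfx₀ : f x₀ = 0 := by
      by_contra h
      exact hx₀ (hgs x₀ (mem_union_right _ (by simpa using h)))
    refine ⟨f + g, add_mem hfW hgW,
      fun x hx => by simp [hfs x hx, hgs x (mem_union_left _ hx)], ?_⟩
    calc k + 1 ≤ #(insert x₀ ({x | f x ≠ 0} : Finset ι)) := by
          rw [card_insert_of_notMem (by simpa using hfx₀)]; omega
      _ ≤ #{x | (f + g) x ≠ 0} := by
          refine card_le_card (insert_subset (by simpa [hfx₀] using hx₀) fun x hx => ?_)
          have := hgs x (mem_union_right _ hx)
          simp_all

end LinearAlgebra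

section CrootLevPach

variable [Field K] {n : ℕ} {ι : Type*} [Fintype ι]

lemma rank_le_of_mem_polyFunFst {F : (Fin n → K) → (Fin n → K) → K} {e : ℕ}
    (hF : F ∈ polyFunFst K n e) (v : ι → Fin n → K) :
    (Matrix.of fun i j => F (v i) (v j)).rank ≤ finrank K (polyFun K n e) :=
  (Matrix.rank_le_finrank_of_forall_col_mem _ ((polyFun K n e).map (LinearMap.funLeft K K v))
    fun j => mem_map_of_mem (hF (v j))).trans (finrank_map_le _ _)

lemma rank_le_of_mem_polyFunSnd {F : (Fin n → K) → (Fin n → K) → K} {e : ℕ}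
    (hF : F ∈ polyFunSnd K n e) (v : ι → Fin n → K) :
    (Matrix.of fun i j => F (v i) (v j)).rank ≤ finrank K (polyFun K n e) := by
  rw [← Matrix.rank_transpose]
  exact (Matrix.rank_le_finrank_of_forall_col_mem _ ((polyFun K n e).map (LinearMap.funLeft K K v))
    fun i => mem_map_of_mem (hF (v i))).trans (finrank_map_le _ _)

-- The Croot–Lev–Pach lemma.
lemma rank_of_apply_add_le {f : (Fin n → K) → K} {e : ℕ} (hf : f ∈ polyFun K n (2 * e + 1))
    (v : ι → Fin n → K) :
    (Matrix.of fun i j => f (v i + v j)).rank ≤ 2 * finrank K (polyFun K n e) := by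
  obtain ⟨F, hF, G, hG, hFG⟩ := mem_sup.mp (add_apply_mem_polyFunFst_sup_polyFunSnd hf)
  have hsplit : Matrix.of (fun i j => f (v i + v j))
      = Matrix.of (fun i j => F (v i) (v j)) + Matrix.of (fun i j => G (v i) (v j)) := by
    ext i j
    exact (congr_fun (congr_fun hFG (v i)) (v j)).symm
  rw [hsplit, two_mul]
  exact (Matrix.rank_add_le _ _).trans
    (add_le_add (rank_le_of_mem_polyFunFst hF v) (rank_le_of_mem_polyFunSnd hG v))

lemma card_support_le_of_threeAPFree [Fintype K] [DecidableEq K] {A : Finset (Fin n → K)}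
    (hA : ThreeAPFree (A : Set (Fin n → K))) {f : (Fin n → K) → K} {e : ℕ}
    (hf : f ∈ polyFun K n (2 * e + 1)) (hsupp : ∀ x, f x ≠ 0 → ∃ a ∈ A, a + a = x) :
    #{x | f x ≠ 0} ≤ 2 * finrank K (polyFun K n e) := by
  -- off the diagonal, `a + b = c + c` with `a, b, c ∈ A` forces `a = b = c`
  have hdiag : Matrix.of (fun a b : A => f (a + b)) = Matrix.diagonal fun a : A => f (a + a) := by
    ext a b
    by_cases hab : a = b
    · simp [hab]
    rw [Matrix.of_apply, Matrix.diagonal_apply_ne _ hab]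
    by_contra hne
    apply hab
    obtain ⟨c, hc, hcab⟩ := hsupp _ hne
    have hac : (a : Fin n → K) = c := hA a.2 hc b.2 hcab.symm
    exact Subtype.ext (hac.trans (add_left_cancel (hcab.trans (by rw [hac]))))
  calc #{x | f x ≠ 0} ≤ #{a : A | f (a + a) ≠ 0} := by
        refine card_le_card_of_surjOn (fun a : A => (a : Fin n → K) + a) fun x hx => ?_
        obtain ⟨a, ha, rfl⟩ := hsupp x (mem_filter.mp hx).2
        exact ⟨⟨a, ha⟩, by simpa using (mem_filter.mp hx).2, rfl⟩
    _ = (Matrix.of fun a b : A => f (a + b)).rank := by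
        rw [hdiag, Matrix.rank_diagonal, Fintype.card_subtype]
    _ ≤ 2 * finrank K (polyFun K n e) := rank_of_apply_add_le hf _

end CrootLevPach

section Counting

def reducedMonomialCount (q n d : ℕ) : ℕ := #{α : Fin n → Fin q | ∑ i, (α i : ℕ) ≤ d}

lemma card_lt_sum_le_reducedMonomialCount {q n d e : ℕ} (h : n * (q - 1) ≤ d + 1 + e) :
    #{α : Fin n → Fin q | d < ∑ i, (α i : ℕ)} ≤ reducedMonomialCount q n e := by
  refine card_le_card_of_injOn (fun α i => Fin.rev (α i)) (fun α hα => ?_) ?_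
  · have hrev : ∑ i, (Fin.rev (α i) : ℕ) + ∑ i, (α i : ℕ) = n * (q - 1) := by
      rw [← sum_add_distrib]
      calc _ = ∑ _i : Fin n, (q - 1) := sum_congr rfl fun i _ => by rw [Fin.val_rev]; omega
        _ = n * (q - 1) := by simp
    have hα' : d < ∑ i, (α i : ℕ) := (mem_filter.mp hα).2
    refine mem_filter.mpr ⟨mem_univ _, (?_ : ∑ i, (Fin.rev (α i) : ℕ) ≤ e)⟩
    generalize n * (q - 1) = N at h hrev
    omega
  · intro α _ β _ hαβ
    funext i
    exact Fin.rev_injective (congr_fun hαβ i)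

lemma sum_pow_sum_val (q n : ℕ) (x : ℝ) :
    ∑ α : Fin n → Fin q, x ^ (∑ i, (α i : ℕ)) = (∑ j : Fin q, x ^ (j : ℕ)) ^ n := by
  calc ∑ α : Fin n → Fin q, x ^ (∑ i, (α i : ℕ))
      = ∑ α : Fin n → Fin q, ∏ i, x ^ (α i : ℕ) := by simp_rw [prod_pow_eq_pow_sum]
    _ = ∏ _i : Fin n, ∑ j : Fin q, x ^ (j : ℕ) := by
        rw [Fintype.prod_sum]
    _ = _ := by rw [prod_const, card_univ, Fintype.card_fin]

lemma reducedMonomialCount_mul_pow_le (q n e : ℕ) {x : ℝ} (hx0 : 0 ≤ x) (hx1 : x ≤ 1) :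
    (reducedMonomialCount q n e : ℝ) * x ^ e ≤ (∑ j : Fin q, x ^ (j : ℕ)) ^ n := by
  calc (reducedMonomialCount q n e : ℝ) * x ^ e
      = ∑ α : Fin n → Fin q with ∑ i, (α i : ℕ) ≤ e, x ^ e := by
        rw [sum_const, nsmul_eq_mul, reducedMonomialCount]
    _ ≤ ∑ α : Fin n → Fin q with ∑ i, (α i : ℕ) ≤ e, x ^ (∑ i, (α i : ℕ)) :=
        sum_le_sum fun α hα => pow_le_pow_of_le_one hx0 hx1 (mem_filter.mp hα).2
    _ ≤ ∑ α : Fin n → Fin q, x ^ (∑ i, (α i : ℕ)) :=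
        sum_le_sum_of_subset_of_nonneg (filter_subset _ _) fun _ _ _ => by positivity
    _ = _ := sum_pow_sum_val q n x

lemma reducedMonomialCount_three_le (n : ℕ) :
    (reducedMonomialCount 3 n (2 * n / 3) : ℝ) ≤ 2.838 ^ n := by
  set M := (reducedMonomialCount 3 n (2 * n / 3) : ℝ)
  have hM : M * (3 / 5) ^ (2 * n / 3) ≤ (49 / 25) ^ n := by
    have := reducedMonomialCount_mul_pow_le 3 n (2 * n / 3) (x := 3 / 5) (by norm_num) (by norm_num)
    rw [Fin.sum_univ_three] at this
    norm_num at this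
    exact this
  -- cube to clear the floor in `2 * n / 3`
  have hcube : M ^ 3 * (3 / 5) ^ (2 * n) ≤ ((49 / 25) ^ 3) ^ n := by
    calc M ^ 3 * (3 / 5) ^ (2 * n) ≤ M ^ 3 * (3 / 5) ^ (3 * (2 * n / 3)) :=
          mul_le_mul_of_nonneg_left (pow_le_pow_of_le_one (by norm_num) (by norm_num) (by omega))
            (by positivity)
      _ = (M * (3 / 5) ^ (2 * n / 3)) ^ 3 := by ring
      _ ≤ ((49 / 25) ^ n) ^ 3 := by gcongr
      _ = ((49 / 25) ^ 3) ^ n := by rw [← pow_mul, ← pow_mul, mul_comm]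
  refine le_of_pow_le_pow_left₀ three_ne_zero (by positivity) ?_
  calc M ^ 3 = M ^ 3 * (3 / 5) ^ (2 * n) * ((5 / 3) ^ 2) ^ n := by
        rw [mul_assoc, pow_mul, ← mul_pow]; norm_num
    _ ≤ ((49 / 25) ^ 3) ^ n * ((5 / 3) ^ 2) ^ n := by gcongr
    _ ≤ (2.838 ^ 3) ^ n := by rw [← mul_pow]; gcongr; norm_num
    _ = (2.838 ^ n) ^ 3 := by rw [← pow_mul, ← pow_mul, mul_comm]

end Counting

section FiniteField

variable [Field K] [Fintype K] {n q : ℕ}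

lemma exists_pow_eq_pow_lt (hq : Fintype.card K = q) (k : ℕ) :
    ∃ r < q, r ≤ k ∧ ∀ x : K, x ^ k = x ^ r := by
  induction k using Nat.strong_induction_on with
  | _ k ih =>
    by_cases hk : k < q
    · exact ⟨k, hk, le_rfl, fun _ => rfl⟩
    have hq2 : 1 < q := hq ▸ Fintype.one_lt_card
    obtain ⟨r, hrq, hrk, hr⟩ := ih (k - q + 1) (by omega)
    refine ⟨r, hrq, by omega, fun x => ?_⟩
    calc x ^ k = x ^ (k - q) * x ^ q := by rw [← pow_add, Nat.sub_add_cancel (by omega)]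
      _ = x ^ r := by rw [← hr, ← hq, FiniteField.pow_card, pow_succ]

lemma polyFun_le_span_reducedMonomialFun (hq : Fintype.card K = q) (d : ℕ) :
    polyFun K n d ≤ span K (Set.range fun α : {α : Fin n → Fin q // ∑ i, (α i : ℕ) ≤ d} =>
        (reducedMonomialFun α.1 : (Fin n → K) → K)) := by
  choose r hrq hrk hr using exists_pow_eq_pow_lt hq
  rw [polyFun, span_le]
  rintro _ ⟨β, hβ, rfl⟩
  refine subset_span ⟨⟨fun i => ⟨r (β i), hrq _⟩,
    (sum_le_sum fun i _ => hrk (β i)).trans hβ⟩, ?_⟩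
  funext x
  simp only [reducedMonomialFun, monomialFun]
  exact prod_congr rfl fun i _ => (hr (β i) (x i)).symm

lemma finrank_polyFun_le (hq : Fintype.card K = q) (d : ℕ) :
    finrank K (polyFun K n d) ≤ reducedMonomialCount q n d :=
  (finrank_mono (polyFun_le_span_reducedMonomialFun hq d)).trans
    ((finrank_range_le_card _).trans (Fintype.card_subtype _).le)

lemma polyFun_eq_top (hq : Fintype.card K = q) : polyFun K n (n * (q - 1)) = ⊤ := by
  classical
  set δ : (Fin n → K) → (Fin n → K) → K := fun y x => ∏ j, (1 - (x j - y j) ^ (q - 1))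
  have hδ_mem : ∀ y, δ y ∈ polyFun K n (n * (q - 1)) := fun y => by
    have hfactor : ∀ j,
        (fun x => 1 - (x j - y j) ^ (q - 1) : (Fin n → K) → K) ∈ polyFun K n (q - 1) := fun j => by
        have := pow_mem_polyFun (sub_mem (apply_mem_polyFun j) (const_mem_polyFun (y j))) (q - 1)
        rw [mul_one] at this
        exact sub_mem (const_mem_polyFun 1) this
    have := prod_mem_polyFun univ fun j _ => hfactor j
    rw [card_univ, Fintype.card_fin] at this
    convert this using 1
    funext x
    simp [δ, Finset.prod_apply]
  have hδ : ∀ y x, δ y x = if x = y then 1 else 0 := fun y x => by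
    have hq1 : q - 1 ≠ 0 := by have : 1 < q := hq ▸ Fintype.one_lt_card; omega
    have hfactor : ∀ z : K, 1 - z ^ (q - 1) = if z = 0 then 1 else 0 := fun z => by
      split_ifs with hz
      · simp [hz, hq1]
      · rw [← hq, FiniteField.pow_card_sub_one_eq_one z hz, sub_self]
    simp only [δ, hfactor, prod_boole, mem_univ, true_implies, sub_eq_zero, funext_iff]
  refine eq_top_iff.mpr fun f _ => ?_
  have hf : f = ∑ y, f y • δ y := by
    funext x
    simp [Finset.sum_apply, hδ]
  exact hf ▸ sum_mem fun y _ => smul_mem _ _ (hδ_mem y)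

lemma card_le_finrank_polyFun_add (hq : Fintype.card K = q) (d : ℕ) :
    q ^ n ≤ finrank K (polyFun K n d) + #{α : Fin n → Fin q | d < ∑ i, (α i : ℕ)} := by
  set U := span K (Set.range fun α : {α : Fin n → Fin q // d < ∑ i, (α i : ℕ)} =>
    (reducedMonomialFun α.1 : (Fin n → K) → K))
  have htop : ⊤ ≤ polyFun K n d ⊔ U := by
    rw [← polyFun_eq_top hq]
    refine (polyFun_le_span_reducedMonomialFun hq _).trans (span_le.mpr ?_)
    rintro _ ⟨⟨α, -⟩, rfl⟩
    by_cases h : ∑ i, (α i : ℕ) ≤ d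
    · exact mem_sup_left (monomialFun_mem_polyFun h)
    · exact mem_sup_right (subset_span ⟨⟨α, by omega⟩, rfl⟩)
  calc q ^ n = finrank K (⊤ : Submodule K ((Fin n → K) → K)) := by
        rw [finrank_top, finrank_fintype_fun_eq_card, Fintype.card_fun, hq, Fintype.card_fin]
    _ ≤ finrank K (polyFun K n d ⊔ U : Submodule K _) := finrank_mono htop
    _ ≤ finrank K (polyFun K n d) + finrank K U := finrank_add_le_finrank_add_finrank _ _
    _ ≤ _ := by
        gcongr
        exact (finrank_range_le_card _).trans (Fintype.card_subtype _).le

end FiniteField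

theorem card_le_of_threeAPFree [Field K] [Fintype K] {n q : ℕ}
    (hq : Fintype.card K = q) (h2 : (2 : K) ≠ 0) {A : Finset (Fin n → K)}
    (hA : ThreeAPFree (A : Set (Fin n → K))) (e : ℕ) :
    #A ≤ #{α : Fin n → Fin q | 2 * e + 1 < ∑ i, (α i : ℕ)} +
      2 * reducedMonomialCount q n e := by
  classical
  set T := A.image fun a => a + a
  have hT : #T = #A := card_image_of_injective _ fun a b hab =>
    smul_right_injective (Fin n → K) h2 (by simpa only [two_smul] using hab)
  have hTc : #(univ \ T) + #T = q ^ n := by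
    rw [card_sdiff_add_card_eq_card (subset_univ T), card_univ, Fintype.card_fun, hq,
      Fintype.card_fin]
  obtain ⟨f, hf, hfT, hcard⟩ :=
    (polyFun K n (2 * e + 1)).exists_mem_finrank_le_card_add_card_support (univ \ T)
  have hsupp := card_support_le_of_threeAPFree hA hf fun x hx => by
    by_contra hxT
    exact hx (hfT x (mem_sdiff.mpr ⟨mem_univ x, fun h => hxT (by simpa [T] using h)⟩))
  have hlow := card_le_finrank_polyFun_add (K := K) (n := n) hq (2 * e + 1)
  have hhigh := finrank_polyFun_le (K := K) (n := n) hq e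
  omega

lemma threeAPFree_of_not_exists {G : Type*} [AddCommGroup G] {s : Set G}
    (h : ¬ ∃ x d : G, d ≠ 0 ∧ x ∈ s ∧ x + d ∈ s ∧ x + 2 • d ∈ s) : ThreeAPFree s := by
  intro a ha b hb c hc habc
  by_contra hab
  refine h ⟨a, b - a, sub_ne_zero.mpr (Ne.symm hab), ha, by simpa using hb, ?_⟩
  convert hc using 1
  rw [two_nsmul, eq_sub_of_add_eq' habc]
  abel

/-- Any cap set `A ⊆ 𝔽₃ⁿ` satisfies `|A| ≤ C · 2.838ⁿ` for an absolute constant `C > 0`. -/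
theorem capset_bound :
    ∃ C : ℝ, 0 < C ∧
      ∀ (n : ℕ) (A : Finset (Fin n → ZMod 3)),
        (¬ ∃ x d : Fin n → ZMod 3, d ≠ 0 ∧ x ∈ A ∧ x + d ∈ A ∧ x + 2 • d ∈ A) →
        (A.card : ℝ) ≤ C * 2.838 ^ n := by
  refine ⟨3, by norm_num, fun n A hA => ?_⟩
  have hcard := card_le_of_threeAPFree (ZMod.card 3) (by decide) (threeAPFree_of_not_exists hA)
    (2 * n / 3)
  have hhigh := card_lt_sum_le_reducedMonomialCount (q := 3) (n := n) (d := 2 * (2 * n / 3) + 1)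
    (e := 2 * n / 3) (by omega)
  calc (A.card : ℝ) ≤ 3 * reducedMonomialCount 3 n (2 * n / 3) := by exact_mod_cast (by omega)
    _ ≤ 3 * 2.838 ^ n := by gcongr; exact reducedMonomialCount_three_le n
end

section
/- Let S be a finite nonempty set and let 1_{Δ(S)} : S × S × S → 𝔽₃ be the indicator function of the diagonal Δ(S) = {(s, s, s) : s ∈ S}, so 1_{Δ(S)}(x, y, z) = 1 if x = y = z and 0 otherwise. Then the slice rank of 1_{Δ(S)} is exactly |S|. -/
/-!
The decomposition `1_Δ(x, y, z) = ∑ₛ 1[x = s] · 1[y = z = s]` shows that the slice rank is at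
most `|S|`. Conversely (Tao's argument), take a decomposition of `1_Δ` into `m` functions of
slice rank one, and let `C` be the set of terms of the form `g_j(z) · h_j(x, y)`. Some `φ`
orthogonal to all these `g_j` has at least `|S| - |C|` nonzero entries. Contracting the
decomposition with `φ` in `z` writes the diagonal matrix `diag φ` as a sum of zero matrices (for
`j ∈ C`) and `m - |C|` matrices of rank at most one, hence `|S| - |C| ≤ m - |C|`.
-/

open Module

/-- A function `f : S^k → 𝔽₃` has slice rank one if it is of the form
`f(x₁, ..., x_k) = g(x_i) · h(x₁, ..., x_{i−1}, x_{i+1}, ..., x_k)`. -/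
def IsSliceRankOne {S : Type*} {k : ℕ} (f : (Fin k → S) → ZMod 3) : Prop :=
  ∃ (i : Fin k) (g : S → ZMod 3) (h : ({j : Fin k // j ≠ i} → S) → ZMod 3),
    ∀ x, f x = g (x i) * h (fun j => x j.1)

/-- The slice rank of `f : S^k → 𝔽₃`: the least `m` such that `f` is a sum of `m`
functions of slice rank one. -/
noncomputable def sliceRank {S : Type*} {k : ℕ} (f : (Fin k → S) → ZMod 3) : ℕ :=
  sInf {m | ∃ fs : Fin m → ((Fin k → S) → ZMod 3),
    (∀ j, IsSliceRankOne (fs j)) ∧ f = ∑ j, fs j}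

theorem Submodule.exists_finrank_le_card_support {K ι : Type*} [Field K] [DecidableEq K]
    [Fintype ι] (V : Submodule K (ι → K)) :
    ∃ φ ∈ V, finrank K V ≤ Fintype.card {i // φ i ≠ 0} := by
  obtain ⟨_, ⟨φ, hφV, rfl⟩, hmax⟩ := Set.exists_max_image
    ((fun ψ : ι → K => Fintype.card {i // ψ i ≠ 0}) '' V) id
    ((Set.finite_Iic (Fintype.card ι)).subset <| by
      rintro _ ⟨ψ, -, rfl⟩; exact Fintype.card_subtype_le _)
    ⟨_, 0, V.zero_mem, rfl⟩
  refine ⟨φ, hφV, ?_⟩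
  let restrict : V →ₗ[K] ({i // φ i ≠ 0} → K) :=
    LinearMap.funLeft K K Subtype.val ∘ₗ V.subtype
  suffices Function.Injective restrict by
    simpa using LinearMap.finrank_le_finrank_of_injective this
  rw [← LinearMap.ker_eq_bot, LinearMap.ker_eq_bot']
  rintro ⟨ψ, hψV⟩ hψ
  have hψφ : ∀ i, φ i ≠ 0 → ψ i = 0 := fun i hi => congrFun hψ ⟨i, hi⟩
  by_contra hψ0
  obtain ⟨s, hs⟩ : ∃ s, ψ s ≠ 0 := by simpa [funext_iff] using hψ0
  have hφs : φ s = 0 := not_not.mp (mt (hψφ s) hs)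
  -- otherwise `φ + ψ` would have strictly larger support than `φ`
  refine (hmax _ ⟨φ + ψ, V.add_mem hφV hψV, rfl⟩).not_gt <|
    Fintype.card_lt_of_injective_not_surjective
      (Subtype.map id fun i hi => by simpa [hψφ i hi] using hi)
      (Subtype.map_injective _ Function.injective_id) fun hsurj => ?_
  obtain ⟨⟨i, hi⟩, hi'⟩ := hsurj ⟨s, by simpa [hφs] using hs⟩
  simp only [Subtype.map, id, Subtype.mk.injEq] at hi'
  exact hi (hi' ▸ hφs)

theorem Matrix.rank_add_le_s4 {K m n : Type*} [Field K] [Fintype m] [Fintype n]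
    (A B : Matrix m n K) : (A + B).rank ≤ A.rank + B.rank := by
  rw [Matrix.rank, Matrix.mulVecLin_add]
  refine (Submodule.finrank_mono ?_).trans (Submodule.finrank_add_le_finrank_add_finrank _ _)
  rintro _ ⟨v, rfl⟩
  exact Submodule.add_mem_sup ⟨v, rfl⟩ ⟨v, rfl⟩

theorem Matrix.rank_sum_le {K m n ι : Type*} [Field K] [Fintype m] [Fintype n]
    (s : Finset ι) (M : ι → Matrix m n K) : (∑ j ∈ s, M j).rank ≤ ∑ j ∈ s, (M j).rank :=
  Finset.sum_hom_rel (r := fun (A : Matrix m n K) b => A.rank ≤ b) Matrix.rank_zero.le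
    fun _ _ _ h => (Matrix.rank_add_le_s4 _ _).trans (by gcongr)

theorem subtype_restrict_eq_of_forall_ne {S : Type*} {k : ℕ} {i : Fin k} {v w : Fin k → S}
    (h : ∀ j ≠ i, v j = w j) : (fun j : {j // j ≠ i} => v j.1) = fun j => w j.1 :=
  funext fun j => h j.1 j.2

section Contraction

variable {S K : Type*} [Fintype S]

def contractLast [CommSemiring K] (f : (Fin 3 → S) → K) (φ : S → K) : Matrix S S K :=
  Matrix.of fun x y => ∑ z, f ![x, y, z] * φ z

theorem contractLast_sum [CommSemiring K] {ι : Type*} (s : Finset ι)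
    (f : ι → (Fin 3 → S) → K) (φ : S → K) :
    contractLast (∑ j ∈ s, f j) φ = ∑ j ∈ s, contractLast (f j) φ := by
  ext x y
  simp only [contractLast, Matrix.of_apply, Finset.sum_apply, Matrix.sum_apply, Finset.sum_mul]
  exact Finset.sum_comm

theorem contractLast_diagonal [CommSemiring K] [DecidableEq S] (φ : S → K) :
    contractLast (fun x : Fin 3 → S => if x 0 = x 1 ∧ x 1 = x 2 then 1 else 0) φ =
      Matrix.diagonal φ := by
  ext x y
  by_cases hxy : x = y
  · subst hxy
    simp [contractLast]
  · simp [contractLast, hxy]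

theorem contractLast_eq_zero [CommSemiring K] {f : (Fin 3 → S) → K} {i : Fin 3} {g : S → K}
    {h : ({j : Fin 3 // j ≠ i} → S) → K} (hf : ∀ x, f x = g (x i) * h (fun j => x j.1))
    (hi : i = 2) {φ : S → K} (hφ : ∑ z, g z * φ z = 0) : contractLast f φ = 0 := by
  subst hi
  ext x y
  have hfz : ∀ z, f ![x, y, z] = g z * h (fun j => ![x, y, x] j.1) := fun z => by
    rw [hf, subtype_restrict_eq_of_forall_ne (w := ![x, y, x])
      fun j hj => by fin_cases j <;> simp_all]
    rfl
  simp [contractLast, hfz, mul_right_comm _ (h _), ← Finset.sum_mul, hφ]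

theorem rank_contractLast_le_one [Field K] {f : (Fin 3 → S) → K} {i : Fin 3} {g : S → K}
    {h : ({j : Fin 3 // j ≠ i} → S) → K} (hf : ∀ x, f x = g (x i) * h (fun j => x j.1))
    (hi : i ≠ 2) (φ : S → K) : (contractLast f φ).rank ≤ 1 := by
  obtain rfl | rfl : i = 0 ∨ i = 1 := by omega
  · convert Matrix.rank_vecMulVec_le g fun y => ∑ z, h (fun j => ![y, y, z] j.1) * φ z
    ext x y
    simp only [contractLast, Matrix.of_apply, Matrix.vecMulVec_apply, Finset.mul_sum]
    refine Finset.sum_congr rfl fun z _ => ?_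
    rw [hf, subtype_restrict_eq_of_forall_ne (w := ![y, y, z])
      fun j hj => by fin_cases j <;> simp_all]
    exact mul_assoc _ _ _
  · convert Matrix.rank_vecMulVec_le (fun x => ∑ z, h (fun j => ![x, x, z] j.1) * φ z) g
    ext x y
    simp only [contractLast, Matrix.of_apply, Matrix.vecMulVec_apply, Finset.sum_mul]
    refine Finset.sum_congr rfl fun z _ => ?_
    rw [hf, subtype_restrict_eq_of_forall_ne (w := ![x, x, z])
      fun j hj => by fin_cases j <;> simp_all]
    exact mul_rotate _ _ _

end Contraction

section SliceRank

variable {S ι : Type*} [Fintype ι] {k : ℕ} {f : (Fin k → S) → ZMod 3}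
  (fs : ι → (Fin k → S) → ZMod 3) (hfs : ∀ j, IsSliceRankOne (fs j)) (hsum : f = ∑ j, fs j)
include hfs hsum

theorem exists_fin_card_sum_eq :
    ∃ gs : Fin (Fintype.card ι) → (Fin k → S) → ZMod 3,
      (∀ j, IsSliceRankOne (gs j)) ∧ f = ∑ j, gs j :=
  ⟨fs ∘ (Fintype.equivFin ι).symm, fun _ => hfs _, hsum.trans (Equiv.sum_comp _ _).symm⟩

theorem sliceRank_le_card : sliceRank f ≤ Fintype.card ι :=
  Nat.sInf_le (exists_fin_card_sum_eq fs hfs hsum)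

theorem exists_fin_sliceRank_sum_eq :
    ∃ gs : Fin (sliceRank f) → (Fin k → S) → ZMod 3,
      (∀ j, IsSliceRankOne (gs j)) ∧ f = ∑ j, gs j :=
  Nat.sInf_mem (s := {m | ∃ gs : Fin m → (Fin k → S) → ZMod 3,
    (∀ j, IsSliceRankOne (gs j)) ∧ f = ∑ j, gs j}) ⟨_, exists_fin_card_sum_eq fs hfs hsum⟩

end SliceRank

theorem exists_isSliceRankOne_sum_eq_diagonal (S : Type*) [Fintype S] [DecidableEq S] :
    ∃ fs : S → (Fin 3 → S) → ZMod 3, (∀ s, IsSliceRankOne (fs s)) ∧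
      (fun x : Fin 3 → S => if x 0 = x 1 ∧ x 1 = x 2 then 1 else 0) = ∑ s, fs s := by
  refine ⟨fun s x => (if x 0 = s then 1 else 0) * (if x 1 = s ∧ x 2 = s then 1 else 0),
    fun s => ⟨0, fun a => if a = s then 1 else 0,
      fun y => if y ⟨1, by decide⟩ = s ∧ y ⟨2, by decide⟩ = s then 1 else 0, fun _ => rfl⟩, ?_⟩
  ext x
  simp only [Finset.sum_apply, ite_mul, one_mul, zero_mul, Finset.sum_ite_eq, Finset.mem_univ,
    if_true]
  exact if_congr (by grind) rfl rfl

theorem card_le_of_diagonal_eq_sum {S : Type*} [Fintype S] [DecidableEq S] {m : ℕ}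
    (fs : Fin m → (Fin 3 → S) → ZMod 3) (hfs : ∀ j, IsSliceRankOne (fs j))
    (hsum : (fun x : Fin 3 → S => if x 0 = x 1 ∧ x 1 = x 2 then 1 else 0) = ∑ j, fs j) :
    Fintype.card S ≤ m := by
  choose i g h hf using hfs
  let A : Matrix {j // i j = 2} S (ZMod 3) := Matrix.of fun j z => g j z
  obtain ⟨φ, hφ, hsupp⟩ := Submodule.exists_finrank_le_card_support (LinearMap.ker A.mulVecLin)
  have hker : Fintype.card S ≤ Fintype.card {j // i j = 2} +
      finrank (ZMod 3) (LinearMap.ker A.mulVecLin) := by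
    have hnullity := A.mulVecLin.finrank_range_add_finrank_ker
    have hrange := A.rank_le_card_height
    rw [finrank_fintype_fun_eq_card] at hnullity
    rw [Matrix.rank] at hrange
    omega
  have hrank : ∀ j, (contractLast (fs j) φ).rank ≤ if i j = 2 then 0 else 1 := by
    intro j
    split_ifs with hj
    · rw [contractLast_eq_zero (hf j) hj (congrFun (LinearMap.mem_ker.mp hφ) ⟨j, hj⟩),
        Matrix.rank_zero]
    · exact rank_contractLast_le_one (hf j) hj φ
  have hcontract : Fintype.card {s // φ s ≠ 0} ≤ Fintype.card {j // i j ≠ 2} := calc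
    Fintype.card {s // φ s ≠ 0} = (contractLast (∑ j, fs j) φ).rank := by
      rw [← hsum, contractLast_diagonal, Matrix.rank_diagonal]
    _ = (∑ j, contractLast (fs j) φ).rank := by rw [contractLast_sum]
    _ ≤ ∑ j, (contractLast (fs j) φ).rank := Matrix.rank_sum_le _ _
    _ ≤ ∑ j, if i j = 2 then 0 else 1 := Finset.sum_le_sum fun j _ => hrank j
    _ = Fintype.card {j // i j ≠ 2} := by simp [Finset.sum_ite, Fintype.card_subtype]
  have hcompl : Fintype.card {j // i j ≠ 2} = m - Fintype.card {j // i j = 2} := by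
    simp [Fintype.card_subtype_compl]
  have hC : Fintype.card {j // i j = 2} ≤ m := by
    simpa using Fintype.card_subtype_le fun j => i j = 2
  omega

theorem sliceRank_diagonal_general (S : Type*) [Fintype S] [DecidableEq S] :
    sliceRank (fun x : Fin 3 → S => if x 0 = x 1 ∧ x 1 = x 2 then 1 else 0) =
      Fintype.card S := by
  obtain ⟨fs, hfs, hsum⟩ := exists_isSliceRankOne_sum_eq_diagonal S
  refine (sliceRank_le_card fs hfs hsum).antisymm ?_
  obtain ⟨gs, hgs, hsum'⟩ := exists_fin_sliceRank_sum_eq fs hfs hsum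
  exact card_le_of_diagonal_eq_sum gs hgs hsum'

/-- For a finite nonempty set `S`, the slice rank of the indicator function of the
diagonal of `S × S × S` is exactly `|S|`. -/
theorem sliceRank_diagonal (S : Type*) [Fintype S] [Nonempty S] [DecidableEq S] :
    sliceRank (fun x : Fin 3 → S => if x 0 = x 1 ∧ x 1 = x 2 then 1 else 0) =
      Fintype.card S :=
  sliceRank_diagonal_general S
end

section
/- Let n be a natural number and let A ⊆ 𝔽₃ⁿ be a cap set (i.e., A contains no triple x, x+d, x+2d with d ≠ 0). Then the slice rank of the indicator function 1_{Δ(A)} : A × A × A → 𝔽₃ of the diagonal Δ(A) = {(a, a, a) : a ∈ A} is at most 3 · #{(a₁, ..., a_n) ∈ {0, 1, 2}ⁿ : a₁ + ⋯ + a_n ≤ 2n/3}. -/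
open Finset

namespace CapAux

/-- Coefficients of the polynomial `1 - (u+v+w)^2` over `𝔽₃`. -/
def cc (p q r : Fin 3) : ZMod 3 :=
  if (p:ℕ) + q + r = 0 then 1
  else if (p:ℕ) + q + r = 1 then 0
  else if (p:ℕ) + q + r = 2 then (if (p:ℕ) = 2 ∨ (q:ℕ) = 2 ∨ (r:ℕ) = 2 then -1 else 1)
  else 0

lemma cc_expand (u v w : ZMod 3) :
    1 - (u + v + w)^2 =
      ∑ t : Fin 3 × Fin 3 × Fin 3,
        cc t.1 t.2.1 t.2.2 * (u ^ (t.1:ℕ) * (v ^ (t.2.1:ℕ) * w ^ (t.2.2:ℕ))) := by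
  revert u v w; decide

lemma cc_support {p q r : Fin 3} (h : cc p q r ≠ 0) : (p:ℕ) + q + r ≤ 2 := by
  revert h; revert p q r; decide

variable {n : ℕ}

def mon (a : Fin n → Fin 3) (x : Fin n → ZMod 3) : ZMod 3 := ∏ i, x i ^ (a i : ℕ)

def Cf (g : Fin n → Fin 3 × Fin 3 × Fin 3) : ZMod 3 := ∏ i, cc (g i).1 (g i).2.1 (g i).2.2

def j1 (g : Fin n → Fin 3 × Fin 3 × Fin 3) : Fin n → Fin 3 := fun i => (g i).1
def j2 (g : Fin n → Fin 3 × Fin 3 × Fin 3) : Fin n → Fin 3 := fun i => (g i).2.1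
def j3 (g : Fin n → Fin 3 × Fin 3 × Fin 3) : Fin n → Fin 3 := fun i => (g i).2.2

def trm (g : Fin n → Fin 3 × Fin 3 × Fin 3) (x y z : Fin n → ZMod 3) : ZMod 3 :=
  Cf g * (mon (j1 g) x * (mon (j2 g) y * mon (j3 g) z))

lemma expand (x y z : Fin n → ZMod 3) :
    (if x + y + z = 0 then (1:ZMod 3) else 0) =
      ∑ g : Fin n → Fin 3 × Fin 3 × Fin 3, trm g x y z := by
  have h2 : ∀ u : ZMod 3, (1:ZMod 3) - u^2 = if u = 0 then 1 else 0 := by decide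
  have h1 : (if x + y + z = 0 then (1:ZMod 3) else 0)
      = ∏ i, (1 - (x i + y i + z i)^2) := by
    simp only [h2, Finset.prod_boole]
    congr 1
    simp [funext_iff, eq_iff_iff]
  rw [h1]
  calc ∏ i, (1 - (x i + y i + z i)^2)
      = ∏ i, ∑ t : Fin 3 × Fin 3 × Fin 3,
          cc t.1 t.2.1 t.2.2 * (x i ^ (t.1:ℕ) * (y i ^ (t.2.1:ℕ) * z i ^ (t.2.2:ℕ))) :=
        Finset.prod_congr rfl fun i _ => cc_expand _ _ _
    _ = ∑ g ∈ Fintype.piFinset (fun _ : Fin n => (univ : Finset (Fin 3 × Fin 3 × Fin 3))),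
          ∏ i, cc (g i).1 (g i).2.1 (g i).2.2 *
            (x i ^ ((g i).1:ℕ) * (y i ^ ((g i).2.1:ℕ) * z i ^ ((g i).2.2:ℕ))) :=
        Finset.prod_univ_sum _ _
    _ = ∑ g : Fin n → Fin 3 × Fin 3 × Fin 3, trm g x y z := by
        rw [Fintype.piFinset_univ]
        refine Finset.sum_congr rfl fun g _ => ?_
        simp [trm, Cf, mon, j1, j2, j3, Finset.prod_mul_distrib]

lemma trm_support {g : Fin n → Fin 3 × Fin 3 × Fin 3} (h : Cf g ≠ 0) :
    (∑ i, ((g i).1 : ℕ)) + (∑ i, ((g i).2.1 : ℕ)) + (∑ i, ((g i).2.2 : ℕ)) ≤ 2 * n := by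
  have hfac : ∀ i : Fin n, cc (g i).1 (g i).2.1 (g i).2.2 ≠ 0 := by
    rw [Cf, Finset.prod_ne_zero_iff] at h
    exact fun i => h i (mem_univ i)
  calc (∑ i, ((g i).1 : ℕ)) + (∑ i, ((g i).2.1 : ℕ)) + (∑ i, ((g i).2.2 : ℕ))
      = ∑ i, (((g i).1 : ℕ) + ((g i).2.1 : ℕ) + ((g i).2.2 : ℕ)) := by
        rw [← Finset.sum_add_distrib, ← Finset.sum_add_distrib]
    _ ≤ ∑ _i : Fin n, 2 := Finset.sum_le_sum fun i _ => cc_support (hfac i)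
    _ = 2 * n := by simp [mul_comm]

def P1 (n : ℕ) (g : Fin n → Fin 3 × Fin 3 × Fin 3) : Prop := 3 * ∑ i, ((g i).1 : ℕ) ≤ 2 * n
def P2 (n : ℕ) (g : Fin n → Fin 3 × Fin 3 × Fin 3) : Prop := 3 * ∑ i, ((g i).2.1 : ℕ) ≤ 2 * n
def P3 (n : ℕ) (g : Fin n → Fin 3 × Fin 3 × Fin 3) : Prop := 3 * ∑ i, ((g i).2.2 : ℕ) ≤ 2 * n
instance : DecidablePred (P1 n) := fun _ => inferInstanceAs (Decidable (_ ≤ _))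
instance : DecidablePred (P2 n) := fun _ => inferInstanceAs (Decidable (_ ≤ _))
instance : DecidablePred (P3 n) := fun _ => inferInstanceAs (Decidable (_ ≤ _))

def T (n : ℕ) : Finset (Fin n → Fin 3) :=
  Finset.univ.filter (fun a : Fin n → Fin 3 => 3 * ∑ i, (a i : ℕ) ≤ 2 * n)

def G1 (n : ℕ) (a : Fin n → Fin 3) (y z : Fin n → ZMod 3) : ZMod 3 :=
  ∑ g ∈ Finset.univ.filter (fun g => P1 n g ∧ j1 g = a),
    Cf g * (mon (j2 g) y * mon (j3 g) z)
def G2 (n : ℕ) (b : Fin n → Fin 3) (x z : Fin n → ZMod 3) : ZMod 3 :=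
  ∑ g ∈ Finset.univ.filter (fun g => (¬ P1 n g ∧ P2 n g) ∧ j2 g = b),
    Cf g * (mon (j1 g) x * mon (j3 g) z)
def G3 (n : ℕ) (c : Fin n → Fin 3) (x y : Fin n → ZMod 3) : ZMod 3 :=
  ∑ g ∈ Finset.univ.filter (fun g => ((¬ P1 n g ∧ ¬ P2 n g) ∧ P3 n g) ∧ j3 g = c),
    Cf g * (mon (j1 g) x * mon (j2 g) y)

lemma decomp (x y z : Fin n → ZMod 3) :
    (if x + y + z = 0 then (1:ZMod 3) else 0) =
      (∑ a ∈ T n, mon a x * G1 n a y z) + (∑ a ∈ T n, mon a y * G2 n a x z)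
        + (∑ a ∈ T n, mon a z * G3 n a x y) := by
  rw [expand]
  have key : ∀ g : Fin n → Fin 3 × Fin 3 × Fin 3, trm g x y z =
      (if P1 n g then trm g x y z else 0)
      + (if ¬ P1 n g ∧ P2 n g then trm g x y z else 0)
      + (if (¬ P1 n g ∧ ¬ P2 n g) ∧ P3 n g then trm g x y z else 0) := by
    intro g
    by_cases h1 : P1 n g
    · simp [h1]
    by_cases h2 : P2 n g
    · simp [h1, h2]
    by_cases h3 : P3 n g
    · simp [h1, h2, h3]
    · have hC : Cf g = 0 := by
        by_contra hC
        have := trm_support hC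
        simp only [P1, P2, P3, not_le] at h1 h2 h3
        omega
      simp [h1, h2, h3, trm, hC]
  rw [Finset.sum_congr rfl fun g _ => key g]
  rw [Finset.sum_add_distrib, Finset.sum_add_distrib]
  rw [← Finset.sum_filter, ← Finset.sum_filter, ← Finset.sum_filter]
  congr 1
  congr 1
  · rw [← Finset.sum_fiberwise_of_maps_to (g := j1) (t := T n)
      (fun g hg => by
        simp only [mem_filter, mem_univ, true_and] at hg
        simp only [T, mem_filter, mem_univ, true_and]
        exact hg)]
    refine Finset.sum_congr rfl fun a _ => ?_
    rw [Finset.filter_filter, G1, Finset.mul_sum]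
    refine Finset.sum_congr rfl fun g hg => ?_
    simp only [mem_filter] at hg
    rw [trm, hg.2.2]
    ring
  · rw [← Finset.sum_fiberwise_of_maps_to (g := j2) (t := T n)
      (fun g hg => by
        simp only [mem_filter, mem_univ, true_and] at hg
        simp only [T, mem_filter, mem_univ, true_and]
        exact hg.2)]
    refine Finset.sum_congr rfl fun a _ => ?_
    rw [Finset.filter_filter, G2, Finset.mul_sum]
    refine Finset.sum_congr rfl fun g hg => ?_
    simp only [mem_filter] at hg
    rw [trm, hg.2.2]
    ring
  · rw [← Finset.sum_fiberwise_of_maps_to (g := j3) (t := T n)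
      (fun g hg => by
        simp only [mem_filter, mem_univ, true_and] at hg
        simp only [T, mem_filter, mem_univ, true_and]
        exact hg.2)]
    refine Finset.sum_congr rfl fun a _ => ?_
    rw [Finset.filter_filter, G3, Finset.mul_sum]
    refine Finset.sum_congr rfl fun g hg => ?_
    simp only [mem_filter] at hg
    rw [trm, hg.2.2]
    ring

lemma cap_iff {A : Finset (Fin n → ZMod 3)}
    (hA : ¬ ∃ x d : Fin n → ZMod 3, d ≠ 0 ∧ x ∈ A ∧ x + d ∈ A ∧ x + 2 • d ∈ A)
    {x y z : Fin n → ZMod 3} (hx : x ∈ A) (hy : y ∈ A) (hz : z ∈ A) :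
    x + y + z = 0 ↔ (x = y ∧ y = z) := by
  have aux1 : ∀ u v w : ZMod 3, u + v + w = 0 → u + ((v - u) + (v - u)) = w := by decide
  have aux2 : ∀ u w : ZMod 3, u + u + w = 0 → u = w := by decide
  have aux3 : ∀ u : ZMod 3, u + u + u = 0 := by decide
  constructor
  · intro h
    by_cases hd : y - x = 0
    · have hxy : x = y := (sub_eq_zero.mp hd).symm
      subst hxy
      refine ⟨rfl, ?_⟩
      funext i
      have hi := congrFun h i
      simp only [Pi.add_apply, Pi.zero_apply] at hi
      exact aux2 _ _ hi
    · exfalso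
      apply hA
      refine ⟨x, y - x, hd, hx, by simpa using hy, ?_⟩
      have hzz : x + 2 • (y - x) = z := by
        funext i
        have hi := congrFun h i
        simp only [Pi.add_apply, Pi.zero_apply] at hi
        simp only [Pi.add_apply, Pi.smul_apply, Pi.sub_apply, two_smul]
        exact aux1 _ _ _ hi
      rw [hzz]; exact hz
  · rintro ⟨h1, h2⟩
    subst h1; subst h2
    funext i
    simp only [Pi.add_apply, Pi.zero_apply]
    exact aux3 _

/-- The three families of slice-rank-one functions. -/
def Φ (A : Finset (Fin n → ZMod 3)) : Fin 3 → (Fin n → Fin 3) → ((Fin 3 → ↥A) → ZMod 3) :=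
  fun i a =>
    ![ fun x => mon a ↑(x 0) * G1 n a ↑(x 1) ↑(x 2),
       fun x => mon a ↑(x 1) * G2 n a ↑(x 0) ↑(x 2),
       fun x => mon a ↑(x 2) * G3 n a ↑(x 0) ↑(x 1) ] i

lemma Φ_rankone (A : Finset (Fin n → ZMod 3)) (i : Fin 3) (a : Fin n → Fin 3) :
    IsSliceRankOne (Φ A i a) := by
  fin_cases i
  · exact ⟨0, fun s => mon a ↑s,
      fun t => G1 n a ↑(t ⟨1, by decide⟩) ↑(t ⟨2, by decide⟩), fun x => rfl⟩
  · exact ⟨1, fun s => mon a ↑s,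
      fun t => G2 n a ↑(t ⟨0, by decide⟩) ↑(t ⟨2, by decide⟩), fun x => rfl⟩
  · exact ⟨2, fun s => mon a ↑s,
      fun t => G3 n a ↑(t ⟨0, by decide⟩) ↑(t ⟨1, by decide⟩), fun x => rfl⟩

end CapAux

open CapAux in
/-- If `A ⊆ 𝔽₃ⁿ` is a cap set, then the slice rank of the indicator function of the
diagonal of `A × A × A` is at most
`3 · #{(a₁, ..., a_n) ∈ {0,1,2}ⁿ : a₁ + ⋯ + a_n ≤ 2n/3}`. -/
theorem sliceRank_capset_diagonal (n : ℕ) (A : Finset (Fin n → ZMod 3))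
    (hA : ¬ ∃ x d : Fin n → ZMod 3, d ≠ 0 ∧ x ∈ A ∧ x + d ∈ A ∧ x + 2 • d ∈ A) :
    sliceRank (fun x : Fin 3 → ↥A => if x 0 = x 1 ∧ x 1 = x 2 then 1 else 0) ≤
      3 * (Finset.univ.filter
        (fun a : Fin n → Fin 3 => 3 * ∑ i, (a i : ℕ) ≤ 2 * n)).card := by
  classical
  show sliceRank _ ≤ 3 * (T n).card
  apply Nat.sInf_le
  let e : (Fin 3 × ↥(T n)) ≃ Fin (3 * (T n).card) :=
    ((Equiv.refl (Fin 3)).prodCongr (T n).equivFin).trans finProdFinEquiv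
  refine ⟨fun j => Φ A (e.symm j).1 ((e.symm j).2 : Fin n → Fin 3),
    fun j => Φ_rankone A _ _, ?_⟩
  have hsum : (∑ j : Fin (3 * (T n).card), Φ A (e.symm j).1 ((e.symm j).2 : Fin n → Fin 3))
      = ∑ p : Fin 3 × ↥(T n), Φ A p.1 (p.2 : Fin n → Fin 3) :=
    Equiv.sum_comp e.symm (fun p => Φ A p.1 (p.2 : Fin n → Fin 3))
  rw [hsum]
  funext x
  rw [Finset.sum_apply]
  have hp : ∑ p : Fin 3 × ↥(T n), Φ A p.1 (p.2 : Fin n → Fin 3) x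
      = ∑ i : Fin 3, ∑ t : ↥(T n), Φ A i (t : Fin n → Fin 3) x :=
    Fintype.sum_prod_type _
  rw [hp, Fin.sum_univ_three]
  have h0 : ∀ t : ↥(T n), Φ A 0 (t : Fin n → Fin 3) x
      = mon (t : Fin n → Fin 3) ↑(x 0) * G1 n (t : Fin n → Fin 3) ↑(x 1) ↑(x 2) := fun t => rfl
  have h1 : ∀ t : ↥(T n), Φ A 1 (t : Fin n → Fin 3) x
      = mon (t : Fin n → Fin 3) ↑(x 1) * G2 n (t : Fin n → Fin 3) ↑(x 0) ↑(x 2) := fun t => rfl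
  have h2 : ∀ t : ↥(T n), Φ A 2 (t : Fin n → Fin 3) x
      = mon (t : Fin n → Fin 3) ↑(x 2) * G3 n (t : Fin n → Fin 3) ↑(x 0) ↑(x 1) := fun t => rfl
  simp only [h0, h1, h2]
  rw [Finset.sum_coe_sort (T n) (fun a => mon a ↑(x 0) * G1 n a ↑(x 1) ↑(x 2)),
      Finset.sum_coe_sort (T n) (fun a => mon a ↑(x 1) * G2 n a ↑(x 0) ↑(x 2)),
      Finset.sum_coe_sort (T n) (fun a => mon a ↑(x 2) * G3 n a ↑(x 0) ↑(x 1))]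
  rw [← decomp]
  have hiff : ((x 0 : Fin n → ZMod 3) + ↑(x 1) + ↑(x 2) = 0) ↔ (x 0 = x 1 ∧ x 1 = x 2) := by
    rw [cap_iff hA (x 0).2 (x 1).2 (x 2).2, Subtype.ext_iff, Subtype.ext_iff]
  simp only [hiff]
end

section
/- Fix a prime power q and let P ∈ 𝔽_q[X] be a nonconstant polynomial with P(0) = 0. Then there exist constants γ ∈ (0, 1) and C > 0, depending only on q and the degree of P, such that the following holds for every natural number n ≥ 1. If A ⊆ {f ∈ 𝔽_q[t] : deg f < n} is such that there is no pair (f, g) with f ∈ A, g ∈ 𝔽_q[t], P(g) ≠ 0, and f + P(g) ∈ A, then |A| ≤ C · (qⁿ)^(1−γ). -/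
/-!
Put `m = (n - 1) / d` and let `g` range over the `q ^ m` polynomials `g_v = ∑_{j < m} v_j t^(j+1)`;
then `P(g_v)` has degree `< n` and vanishes only for `v = 0`. For `w` of degree `< n`, the number
of `v` with `P(g_v) = w`, read in `𝔽_q`, is `M(w) = ∑_v ∏_{i < n} (1 - (w_i - Q_i(v)) ^ (q - 1))`,
where `Q_i(v)` is the `i`-th coefficient of `P(g_v)`, a polynomial of degree `≤ d` in `v`. Since
summing a polynomial of degree `< m (q - 1)` over `𝔽_q ^ m` gives `0`, `M` is a polynomial in `w`
of degree at most `D = (q - 1) (d n - m) / d` with all exponents `< q`.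

If `A` contains no pair `f, f + P(g)` with `P(g) ≠ 0`, the matrix `(M(f' - f))_{f, f' ∈ A}` is the
identity. By the Croot–Lev–Pach argument (expand `(f' - f)^b` and split each monomial according to
which of its two halves has degree `≤ D / 2`), its rank is at most twice the number of exponent
vectors in `[0, q)^n` of total degree `≤ D / 2`. As `D / 2 ≤ (q - 1) / 2 · (1 - 1 / d²) n + q`
stays a constant fraction below the mean `(q - 1) n / 2`, an exponential-moment bound shows that
this number is `O(ρ ^ n)` for some `ρ < q`.
-/

open Finset Polynomial Filter Topology

def boundedExponents (σ : Type*) [Fintype σ] [DecidableEq σ] (N k : ℕ) : Finset (σ → ℕ) :=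
  {e ∈ Fintype.piFinset fun _ : σ => range N | ∑ s, e s ≤ k}

section Exponents

variable {σ : Type*} [Fintype σ] [DecidableEq σ]

theorem mem_or_sub_mem_boundedExponents {N D : ℕ} {a b : σ → ℕ}
    (hb : b ∈ boundedExponents σ N D) (hab : a ≤ b) :
    a ∈ boundedExponents σ N (D / 2) ∨ b - a ∈ boundedExponents σ N (D / 2) := by
  simp only [boundedExponents, mem_filter, Fintype.mem_piFinset, mem_range, Pi.sub_apply] at hb ⊢
  have hsum : ∑ s, (b s - a s) + ∑ s, a s = ∑ s, b s := by
    rw [← sum_add_distrib]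
    exact sum_congr rfl fun s _ => Nat.sub_add_cancel (hab s)
  by_cases ha : ∑ s, a s ≤ D / 2
  · exact Or.inl ⟨fun s => (hab s).trans_lt (hb.1 s), ha⟩
  · exact Or.inr ⟨fun s => (Nat.sub_le _ _).trans_lt (hb.1 s), by omega⟩

theorem card_boundedExponents_mul_pow_le (N k : ℕ) {x : ℝ} (hx0 : 0 ≤ x) (hx1 : x ≤ 1) :
    #(boundedExponents σ N k) * x ^ k ≤ (∑ e ∈ range N, x ^ e) ^ Fintype.card σ := by
  calc #(boundedExponents σ N k) * x ^ k
      = ∑ _e ∈ boundedExponents σ N k, x ^ k := by rw [sum_const, nsmul_eq_mul]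
    _ ≤ ∑ e ∈ boundedExponents σ N k, x ^ ∑ s, e s :=
        sum_le_sum fun e he => pow_le_pow_of_le_one hx0 hx1 (mem_filter.1 he).2
    _ ≤ ∑ e ∈ Fintype.piFinset fun _ : σ => range N, ∏ s, x ^ e s := by
        simp_rw [prod_pow_eq_pow_sum]
        exact sum_le_sum_of_subset_of_nonneg (filter_subset _ _) fun _ _ _ => by positivity
    _ = (∑ e ∈ range N, x ^ e) ^ Fintype.card σ := by
        rw [← prod_univ_sum, prod_const, card_univ]

end Exponents

namespace Matrix

variable {K ι ι' κ ε : Type*} [Field K] [Fintype ι']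

theorem rank_add_le_s7 (A B : Matrix ι ι' K) : (A + B).rank ≤ A.rank + B.rank := by
  have h := LinearMap.range_add_le A.mulVecLin B.mulVecLin
  rw [← mulVecLin_add] at h
  exact (Submodule.finrank_mono h).trans (Submodule.finrank_add_le_finrank_add_finrank _ _)

theorem rank_le_card_of_eq_sum_mul [DecidableEq ε] {M : Matrix ι ι' K} {T : Finset κ}
    {S : Finset ε} {key : κ → ε} (hkey : ∀ p ∈ T, key p ∈ S) (u : κ → ι → K) (v : ε → ι' → K)
    (hM : ∀ i j, M i j = ∑ p ∈ T, u p i * v (key p) j) : M.rank ≤ #S := by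
  let U : Matrix ι S K := fun i e => ∑ p ∈ T with key p = e, u p i
  let V : Matrix S ι' K := fun e j => v e j
  have hUV : M = U * V := by
    ext i j
    rw [hM, mul_apply, ← sum_fiberwise_of_maps_to hkey, ← S.sum_coe_sort]
    refine Fintype.sum_congr _ _ fun e => ?_
    rw [sum_mul]
    exact sum_congr rfl fun p hp => by rw [(mem_filter.1 hp).2]
  calc M.rank = (U * V).rank := by rw [hUV]
    _ ≤ Fintype.card S := (rank_mul_le_left U V).trans (rank_le_card_width U)
    _ = #S := Fintype.card_coe S

theorem rank_of_sum_mul_prod_sub_pow_le [Fintype ι] {σ : Type*} [Fintype σ] [DecidableEq σ]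
    (x : ι → σ → K) (y : ι' → σ → K) (c : (σ → ℕ) → K) (N D : ℕ) :
    (of fun i j => ∑ b ∈ boundedExponents σ N D, c b * ∏ s, (y j s - x i s) ^ b s).rank ≤
      2 * #(boundedExponents σ N (D / 2)) := by
  set L := boundedExponents σ N (D / 2)
  set T := (boundedExponents σ N D).sigma fun b => Fintype.piFinset fun s => range (b s + 1)
  have hT : ∀ p ∈ T, p.2 ∈ L ∨ p.1 - p.2 ∈ L := by
    intro p hp
    rw [mem_sigma, Fintype.mem_piFinset] at hp
    exact mem_or_sub_mem_boundedExponents hp.1 fun s => Nat.lt_succ_iff.1 (mem_range.1 (hp.2 s))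
  let coef : (Σ _ : σ → ℕ, σ → ℕ) → K := fun p => c p.1 * ∏ s, ((p.1 s).choose (p.2 s) : K)
  let X : (σ → ℕ) → ι → K := fun e i => ∏ s, (-x i s) ^ e s
  let Y : (σ → ℕ) → ι' → K := fun e j => ∏ s, y j s ^ e s
  have hexpand : ∀ i j, ∑ b ∈ boundedExponents σ N D, c b * ∏ s, (y j s - x i s) ^ b s =
      ∑ p ∈ T, coef p * X (p.1 - p.2) i * Y p.2 j := by
    intro i j
    simp_rw [T, sum_sigma, sub_eq_add_neg, add_pow, prod_univ_sum, mul_sum]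
    refine sum_congr rfl fun b _ => sum_congr rfl fun a _ => ?_
    simp only [coef, X, Y, Pi.sub_apply, prod_mul_distrib]
    ring
  let M₁ : Matrix ι ι' K := of fun i j => ∑ p ∈ T with p.2 ∈ L, coef p * X (p.1 - p.2) i * Y p.2 j
  let M₂ : Matrix ι ι' K := of fun i j => ∑ p ∈ T with p.2 ∉ L, coef p * Y p.2 j * X (p.1 - p.2) i
  have hM : of (fun i j => ∑ b ∈ boundedExponents σ N D, c b * ∏ s, (y j s - x i s) ^ b s) =
      M₁ + M₂ := by
    ext i j
    simp only [of_apply, add_apply, M₁, M₂, hexpand, mul_right_comm _ (Y _ j)]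
    exact (sum_filter_add_sum_filter_not _ _ _).symm
  have hM₁ : M₁.rank ≤ #L :=
    rank_le_card_of_eq_sum_mul (fun p hp => (mem_filter.1 hp).2) _ Y fun _ _ => rfl
  have hM₂ : M₂.rank ≤ #L := by
    rw [← rank_transpose]
    refine rank_le_card_of_eq_sum_mul (key := fun p : (Σ _ : σ → ℕ, σ → ℕ) => p.1 - p.2)
      (fun p hp => ?_) _ X fun _ _ => rfl
    obtain ⟨hpT, hpL⟩ := mem_filter.1 hp
    exact (hT p hpT).resolve_left hpL
  rw [hM, two_mul]
  exact (rank_add_le_s7 M₁ M₂).trans (add_le_add hM₁ hM₂)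

end Matrix

section GenericPoly

variable {R : Type*} [CommRing R]

variable (R) in
/-- The exponents start at `1` so that every specialisation `g` has `g(0) = 0`; together with
`P(0) = 0` this makes `P ∘ g = 0` only for `g = 0`. -/
noncomputable def genericPoly (m : ℕ) : (MvPolynomial (Fin m) R)[X] :=
  ∑ j : Fin m, C (MvPolynomial.X j) * X ^ ((j : ℕ) + 1)

theorem coeff_genericPoly (m k : ℕ) :
    (genericPoly R m).coeff k = ∑ j : Fin m, if k = (j : ℕ) + 1 then MvPolynomial.X j else 0 := by
  simp [genericPoly, finsetSum_coeff]

theorem coeff_genericPoly_zero (m : ℕ) : (genericPoly R m).coeff 0 = 0 := by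
  simp [coeff_genericPoly]

theorem coeff_genericPoly_succ {m : ℕ} (j : Fin m) :
    (genericPoly R m).coeff ((j : ℕ) + 1) = MvPolynomial.X j := by
  simp [coeff_genericPoly, Fin.val_inj]

theorem natDegree_genericPoly_le (m : ℕ) : (genericPoly R m).natDegree ≤ m :=
  natDegree_sum_le_of_forall_le _ _ fun j _ => (natDegree_C_mul_X_pow_le _ _).trans j.isLt

theorem totalDegree_coeff_genericPoly_le [Nontrivial R] (m k : ℕ) :
    ((genericPoly R m).coeff k).totalDegree ≤ 1 := by
  rw [coeff_genericPoly]
  refine (MvPolynomial.totalDegree_finsetSum _ _).trans (Finset.sup_le fun j _ => ?_)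
  split_ifs
  · exact (MvPolynomial.totalDegree_X j).le
  · simp

theorem totalDegree_coeff_pow_le {σ : Type*} {G : (MvPolynomial σ R)[X]}
    (hG : ∀ k, (G.coeff k).totalDegree ≤ 1) (e k : ℕ) : ((G ^ e).coeff k).totalDegree ≤ e := by
  induction e generalizing k with
  | zero => rw [pow_zero, coeff_one]; split_ifs <;> simp
  | succ e ih =>
    rw [pow_succ, coeff_mul]
    exact (MvPolynomial.totalDegree_finsetSum _ _).trans (Finset.sup_le fun p _ =>
      (MvPolynomial.totalDegree_mul _ _).trans (add_le_add (ih _) (hG _)))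

theorem totalDegree_coeff_map_C_comp_le {σ : Type*} (P : R[X]) {G : (MvPolynomial σ R)[X]}
    (hG : ∀ k, (G.coeff k).totalDegree ≤ 1) (k : ℕ) :
    (((P.map MvPolynomial.C).comp G).coeff k).totalDegree ≤ P.natDegree := by
  rw [comp, eval₂_map, eval₂_eq_sum_range, finsetSum_coeff]
  refine (MvPolynomial.totalDegree_finsetSum _ _).trans (Finset.sup_le fun e he => ?_)
  rw [RingHom.comp_apply, coeff_C_mul, ← MvPolynomial.smul_eq_C_mul]
  exact (MvPolynomial.totalDegree_smul_le _ _).trans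
    ((totalDegree_coeff_pow_le hG e k).trans (Nat.lt_succ_iff.1 (mem_range.1 he)))

theorem map_eval_genericPoly_eq_zero_iff {m : ℕ} (v : Fin m → R) :
    (genericPoly R m).map (MvPolynomial.eval v) = 0 ↔ v = 0 := by
  refine ⟨fun h => funext fun j => ?_, ?_⟩
  · simpa [coeff_genericPoly_succ] using congr_arg (coeff · ((j : ℕ) + 1)) h
  · rintro rfl
    ext k
    simp [coeff_genericPoly, apply_ite]

theorem comp_map_eval_genericPoly_eq_zero_iff [IsDomain R] {P : R[X]} (hP : 0 < P.natDegree)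
    (hP0 : P.coeff 0 = 0) {m : ℕ} (v : Fin m → R) :
    P.comp ((genericPoly R m).map (MvPolynomial.eval v)) = 0 ↔ v = 0 := by
  have hP' : P ≠ 0 := ne_zero_of_natDegree_gt hP
  rw [comp_eq_zero_iff, coeff_map, coeff_genericPoly_zero, map_zero, map_zero,
    ← coeff_zero_eq_eval_zero, map_eval_genericPoly_eq_zero_iff]
  simp [hP', hP0]

theorem eval_coeff_map_C_comp_genericPoly (P : R[X]) {m : ℕ} (v : Fin m → R) (k : ℕ) :
    MvPolynomial.eval v (((P.map MvPolynomial.C).comp (genericPoly R m)).coeff k) =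
      (P.comp ((genericPoly R m).map (MvPolynomial.eval v))).coeff k := by
  rw [← coeff_map, map_comp, Polynomial.map_map,
    show (MvPolynomial.eval v).comp MvPolynomial.C = RingHom.id R from
      RingHom.ext MvPolynomial.eval_C, Polynomial.map_id]

end GenericPoly

section FiniteField

variable {F : Type*} [Field F] [Fintype F]

theorem one_sub_pow_card_sub_one [DecidableEq F] (x : F) :
    1 - x ^ (Fintype.card F - 1) = if x = 0 then 1 else 0 := by
  split_ifs with hx
  · rw [hx, zero_pow (Nat.sub_ne_zero_of_lt Fintype.one_lt_card), sub_zero]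
  · rw [FiniteField.pow_card_sub_one_eq_one x hx, sub_self]

theorem prod_one_sub_coeff_pow_card_sub_one [DecidableEq F] {n : ℕ} {u : F[X]} (hu : u.degree < n) :
    ∏ i : Fin n, (1 - u.coeff i ^ (Fintype.card F - 1)) = if u = 0 then 1 else 0 := by
  simp_rw [one_sub_pow_card_sub_one, prod_ite_zero, prod_const_one]
  congr 1
  refine propext ⟨fun h => ext fun k => ?_, fun h i _ => by rw [h, coeff_zero]⟩
  rcases lt_or_ge k n with hk | hk
  · exact h ⟨k, hk⟩ (mem_univ _)
  · exact coeff_eq_zero_of_degree_lt (hu.trans_le (by exact_mod_cast hk))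

theorem one_sub_sub_pow_eq_sum {R : Type*} [CommRing R] (N : ℕ) (w r : R) :
    1 - (w - r) ^ N = ∑ k ∈ range (N + 1),
      ((if k = 0 then 1 else 0) - (-r) ^ (N - k) * (N.choose k : R)) * w ^ k := by
  rw [sub_eq_add_neg w r, add_pow]
  simp only [sub_mul, ite_mul, one_mul, zero_mul, sum_sub_distrib, sum_ite_eq', mem_range,
    Nat.zero_lt_succ, if_true, pow_zero]
  congr 1
  exact sum_congr rfl fun k _ => by ring

theorem sum_le_of_mul_le_mul_sum_sub {ι : Type*} [Fintype ι] {b : ι → ℕ} {N d s : ℕ}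
    (hd : 0 < d) (hb : ∀ i, b i ≤ N) (h : N * s ≤ d * ∑ i, (N - b i)) :
    ∑ i, b i ≤ N * (d * Fintype.card ι - s) / d := by
  have hsplit : ∑ i, (N - b i) + ∑ i, b i = N * Fintype.card ι := by
    rw [← sum_add_distrib, sum_congr rfl fun i _ => Nat.sub_add_cancel (hb i), sum_const,
      card_univ, smul_eq_mul, mul_comm]
  have : N * (d * Fintype.card ι) = d * ∑ i, (N - b i) + d * ∑ i, b i := by
    rw [← mul_add, hsplit]; ring
  rw [Nat.le_div_iff_mul_le hd, mul_comm (∑ i, b i) d, Nat.mul_sub, this]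
  omega

theorem exists_sum_prod_one_sub_pow_eq {ι σ : Type*} [Fintype ι] [DecidableEq ι] [Fintype σ]
    [DecidableEq σ] (Q : ι → MvPolynomial σ F) {d : ℕ} (hd : 0 < d)
    (hQ : ∀ i, (Q i).totalDegree ≤ d) :
    ∃ c : (ι → ℕ) → F, ∀ w : ι → F,
      ∑ v : σ → F, ∏ i, (1 - (w i - MvPolynomial.eval v (Q i)) ^ (Fintype.card F - 1)) =
        ∑ b ∈ boundedExponents ι (Fintype.card F)
            ((Fintype.card F - 1) * (d * Fintype.card ι - Fintype.card σ) / d),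
          c b * ∏ i, w i ^ b i := by
  set N := Fintype.card F - 1
  have hq : Fintype.card F = N + 1 := (Nat.succ_pred_eq_of_pos Fintype.card_pos).symm
  let a : ι → ℕ → MvPolynomial σ F := fun i k =>
    (if k = 0 then 1 else 0) - (-Q i) ^ (N - k) * (N.choose k : MvPolynomial σ F)
  have ha : ∀ i k, (a i k).totalDegree ≤ d * (N - k) := by
    intro i k
    refine (MvPolynomial.totalDegree_sub _ _).trans (max_le ?_ ?_)
    · split_ifs <;> simp
    · refine (MvPolynomial.totalDegree_mul _ _).trans ?_
      rw [← map_natCast MvPolynomial.C, MvPolynomial.totalDegree_C, add_zero]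
      refine (MvPolynomial.totalDegree_pow _ _).trans ?_
      rw [MvPolynomial.totalDegree_neg, mul_comm]
      exact Nat.mul_le_mul_right _ (hQ i)
  let c : (ι → ℕ) → F := fun b => ∑ v : σ → F, MvPolynomial.eval v (∏ i, a i (b i))
  have hc : ∀ b, c b ≠ 0 → N * Fintype.card σ ≤ d * ∑ i, (N - b i) := by
    intro b hcb
    by_contra! h
    refine hcb (MvPolynomial.sum_eval_eq_zero _
      ((MvPolynomial.totalDegree_finsetProd _ _).trans_lt ?_))
    rw [mul_sum] at h
    exact (sum_le_sum fun i _ => ha i (b i)).trans_lt h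
  refine ⟨c, fun w => ?_⟩
  calc ∑ v : σ → F, ∏ i, (1 - (w i - MvPolynomial.eval v (Q i)) ^ N)
      = ∑ v : σ → F, ∑ b ∈ Fintype.piFinset fun _ : ι => range (N + 1),
          MvPolynomial.eval v (∏ i, a i (b i)) * ∏ i, w i ^ b i := by
        simp_rw [one_sub_sub_pow_eq_sum, prod_univ_sum, map_prod, ← prod_mul_distrib]
        simp [a]
    _ = ∑ b ∈ Fintype.piFinset fun _ : ι => range (N + 1), c b * ∏ i, w i ^ b i := by
        rw [sum_comm]; simp_rw [c, sum_mul]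
    _ = _ := by
        rw [hq]
        refine (sum_subset (filter_subset _ _) fun b hb hbE => ?_).symm
        by_contra hcb
        refine hbE (mem_filter.2 ⟨hb, sum_le_of_mul_le_mul_sum_sub hd (fun i => ?_)
          (hc b (left_ne_zero_of_mul hcb))⟩)
        exact Nat.lt_succ_iff.1 (mem_range.1 (Fintype.mem_piFinset.1 hb i))

def countingDegree (q d n : ℕ) : ℕ := (q - 1) * (d * n - (n - 1) / d) / d

theorem sum_prod_one_sub_pow_eq_card [DecidableEq F] (P : F[X]) {m n : ℕ}
    (hm : P.natDegree * m < n) {w : F[X]} (hw : w.degree < n) :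
    ∑ v : Fin m → F, ∏ i : Fin n, (1 - (w.coeff i - MvPolynomial.eval v
        (((P.map MvPolynomial.C).comp (genericPoly F m)).coeff i)) ^ (Fintype.card F - 1)) =
      #{v | P.comp ((genericPoly F m).map (MvPolynomial.eval v)) = w} := by
  rw [natCast_card_filter]
  refine sum_congr rfl fun v _ => ?_
  set g := (genericPoly F m).map (MvPolynomial.eval v)
  have hdeg : (P.comp g).degree < n := by
    refine degree_le_natDegree.trans_lt (WithBot.coe_lt_coe.2 (natDegree_comp_le.trans_lt ?_))
    exact (Nat.mul_le_mul_left _ (natDegree_map_le.trans (natDegree_genericPoly_le m))).trans_lt hm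
  simp_rw [eval_coeff_map_C_comp_genericPoly, ← coeff_sub]
  rw [prod_one_sub_coeff_pow_card_sub_one ((degree_sub_le _ _).trans_lt (max_lt hw hdeg))]
  exact if_congr (sub_eq_zero.trans eq_comm) rfl rfl

theorem card_le_two_mul_card_boundedExponents {P : F[X]} (hP : 0 < P.natDegree)
    (hP0 : P.coeff 0 = 0) {n : ℕ} (hn : 0 < n) {A : Finset F[X]} (hA : ∀ f ∈ A, f.degree < n)
    (hfree : ¬ ∃ f g : F[X], f ∈ A ∧ P.comp g ≠ 0 ∧ f + P.comp g ∈ A) :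
    #A ≤ 2 * #(boundedExponents (Fin n) (Fintype.card F)
      (countingDegree (Fintype.card F) P.natDegree n / 2)) := by
  classical
  set m := (n - 1) / P.natDegree
  have hm : P.natDegree * m < n := (Nat.mul_div_le (n - 1) _).trans_lt (by omega)
  obtain ⟨c, hc⟩ := exists_sum_prod_one_sub_pow_eq
    (fun i : Fin n => ((P.map MvPolynomial.C).comp (genericPoly F m)).coeff i) hP
    fun i => totalDegree_coeff_map_C_comp_le P (totalDegree_coeff_genericPoly_le m) i
  simp only [Fintype.card_fin] at hc
  let x : A → Fin n → F := fun f i => (f : F[X]).coeff i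
  have hM : Matrix.of (fun f f' : A => ∑ b ∈ boundedExponents (Fin n) (Fintype.card F)
      (countingDegree (Fintype.card F) P.natDegree n), c b * ∏ i, (x f' i - x f i) ^ b i) = 1 := by
    ext f f'
    rw [Matrix.of_apply, countingDegree, ← hc, Matrix.one_apply]
    simp_rw [x, ← coeff_sub]
    rw [sum_prod_one_sub_pow_eq_card P hm
      ((degree_sub_le _ _).trans_lt (max_lt (hA _ f'.2) (hA _ f.2)))]
    split_ifs with h
    · simp_rw [h, sub_self, comp_map_eval_genericPoly_eq_zero_iff hP hP0]
      rw [filter_eq', if_pos (mem_univ _), card_singleton, Nat.cast_one]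
    · rw [filter_eq_empty_iff.2 fun v _ hv => ?_, card_empty, Nat.cast_zero]
      refine hfree ⟨f, _, f.2, ?_, by rw [hv, add_sub_cancel]; exact f'.2⟩
      rw [hv, sub_ne_zero]
      exact fun e => h (Subtype.ext e.symm)
  calc #A = (1 : Matrix A A F).rank := by rw [Matrix.rank_one, Fintype.card_coe]
    _ = _ := by rw [← hM]
    _ ≤ _ := Matrix.rank_of_sum_mul_prod_sub_pow_le x x c _ _

end FiniteField

theorem HasDerivAt.eventually_lt_of_deriv_neg {f : ℝ → ℝ} {f' a : ℝ} (hf : HasDerivAt f f' a)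
    (hf' : f' < 0) : ∀ᶠ y in 𝓝[<] a, f a < f y := by
  have hslope := ((hasDerivAt_iff_tendsto_slope.1 hf).mono_left
    (nhdsLT_le_nhdsNE a)).eventually_lt_const hf'
  filter_upwards [hslope, self_mem_nhdsWithin] with y hy (hya : y < a)
  rw [slope_def_field, div_neg_iff] at hy
  rcases hy with ⟨h, -⟩ | ⟨-, h⟩ <;> linarith

theorem exists_sum_pow_lt_mul_rpow {q : ℕ} (hq : 0 < q) {β : ℝ} (hβ : β < (q - 1) / 2) :
    ∃ x : ℝ, 0 < x ∧ x < 1 ∧ ∑ e ∈ range q, x ^ e < q * x ^ β := by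
  have hgauss : ∑ e ∈ range q, (e : ℝ) = q * (q - 1) / 2 := by
    have h := congrArg (Nat.cast : ℕ → ℝ) (sum_range_id_mul_two q)
    push_cast [Nat.cast_sub (Nat.one_le_iff_ne_zero.2 hq.ne')] at h
    linarith
  have hderiv : HasDerivAt (fun x : ℝ => q * x ^ β - ∑ e ∈ range q, x ^ e)
      (q * β - q * (q - 1) / 2) 1 := by
    have h1 := (Real.hasDerivAt_rpow_const (p := β) (Or.inl one_ne_zero)).const_mul (q : ℝ)
    have h2 := HasDerivAt.fun_sum (u := range q) fun e _ => hasDerivAt_pow e (1 : ℝ)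
    simpa [hgauss] using h1.fun_sub h2
  have hneg : (q : ℝ) * β - q * (q - 1) / 2 < 0 := by
    have : (0 : ℝ) < q := by exact_mod_cast hq
    nlinarith
  obtain ⟨x, hx, hx01⟩ := ((hderiv.eventually_lt_of_deriv_neg hneg).and
    (Ioo_mem_nhdsLT zero_lt_one)).exists
  refine ⟨x, hx01.1, hx01.2, ?_⟩
  simp only [Real.one_rpow, one_pow, sum_const, card_range, nsmul_eq_mul, mul_one, sub_self] at hx
  linarith

theorem countingDegree_div_two_le {q d : ℕ} (hq : 1 ≤ q) (hd : 1 ≤ d) (n : ℕ) :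
    ((countingDegree q d n / 2 : ℕ) : ℝ) ≤ (q - 1) / 2 * (1 - 1 / d ^ 2) * n + q := by
  have hdiv := Nat.lt_mul_div_succ (n - 1) hd
  set m := (n - 1) / d
  have hm : m ≤ d * n :=
    (Nat.div_le_self _ _).trans ((Nat.sub_le _ _).trans (Nat.le_mul_of_pos_left n hd))
  have hdm : (n : ℝ) ≤ d * (m + 1) := by
    exact_mod_cast (show n ≤ d * (m + 1) by omega)
  have hdR : (1 : ℝ) ≤ d := by exact_mod_cast hd
  have hqR : (1 : ℝ) ≤ q := by exact_mod_cast hq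
  calc ((countingDegree q d n / 2 : ℕ) : ℝ) ≤ ((q - 1) * (d * n - m) / d : ℕ) / 2 := Nat.cast_div_le
    _ ≤ ((q - 1) * (d * n - m) : ℕ) / d / 2 := by gcongr; exact Nat.cast_div_le
    _ = (q - 1) * (d * n - m) / d / 2 := by push_cast [Nat.cast_sub hq, Nat.cast_sub hm]; ring
    _ ≤ (q - 1) / 2 * (1 - 1 / d ^ 2) * n + q := by
        rw [div_div, div_le_iff₀ (by positivity)]
        have hqd : ((q : ℝ) - 1) * d ≤ 2 * q * d ^ 2 := by
          nlinarith [mul_le_mul_of_nonneg_left hdR (by positivity : (0 : ℝ) ≤ q * d)]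
        field_simp
        nlinarith [mul_nonneg (sub_nonneg.2 hqR) (sub_nonneg.2 hdm)]

theorem exists_two_mul_card_boundedExponents_le {q d : ℕ} (hq : 2 ≤ q) (hd : 1 ≤ d) :
    ∃ ρ C : ℝ, 1 < ρ ∧ ρ < q ∧ 0 < C ∧ ∀ n : ℕ,
      2 * (#(boundedExponents (Fin n) q (countingDegree q d n / 2)) : ℝ) ≤ C * ρ ^ n := by
  set β : ℝ := (q - 1) / 2 * (1 - 1 / d ^ 2)
  have hqR : (2 : ℝ) ≤ q := by exact_mod_cast hq
  have hdR : (1 : ℝ) ≤ d := by exact_mod_cast hd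
  have hd2 : 0 < 1 / (d : ℝ) ^ 2 ∧ 1 / (d : ℝ) ^ 2 ≤ 1 :=
    ⟨by positivity, (div_le_one (by positivity)).2 (one_le_pow₀ hdR)⟩
  have hβ0 : 0 ≤ β := mul_nonneg (by linarith) (by linarith)
  have hβ : β < (q - 1) / 2 := mul_lt_of_lt_one_right (by linarith) (by linarith)
  obtain ⟨x, hx0, hx1, hxq⟩ := exists_sum_pow_lt_mul_rpow (by omega) hβ
  set s := ∑ e ∈ range q, x ^ e
  have hs : 1 < s := by
    have : ∑ e ∈ range 2, x ^ e ≤ s := sum_le_sum_of_subset_of_nonneg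
      (range_subset_range.2 hq) fun _ _ _ => by positivity
    simp only [sum_range_succ, range_one, sum_singleton, pow_zero, pow_one] at this
    linarith
  have hxβ : 0 < x ^ β := Real.rpow_pos_of_pos hx0 β
  refine ⟨s / x ^ β, 2 / x ^ (q : ℝ), ?_, (div_lt_iff₀ hxβ).2 hxq, by positivity, fun n => ?_⟩
  · exact (one_lt_div hxβ).2 ((Real.rpow_le_one hx0.le hx1.le hβ0).trans_lt hs)
  set k := countingDegree q d n / 2
  have hcard := card_boundedExponents_mul_pow_le (σ := Fin n) q k hx0.le hx1.le
  rw [Fintype.card_fin, ← le_div_iff₀ (by positivity)] at hcard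
  have hxk : x ^ (β * n + q) ≤ x ^ k := by
    rw [← Real.rpow_natCast x k]
    exact Real.rpow_le_rpow_of_exponent_ge hx0 hx1.le (countingDegree_div_two_le (by omega) hd n)
  calc 2 * (#(boundedExponents (Fin n) q k) : ℝ) ≤ 2 * (s ^ n / x ^ k) := by gcongr
    _ ≤ 2 * (s ^ n / x ^ (β * n + q)) := by gcongr
    _ = 2 / x ^ (q : ℝ) * (s / x ^ β) ^ n := by
        rw [Real.rpow_add hx0, Real.rpow_mul_natCast hx0.le, div_pow]
        field_simp

theorem exists_rpow_one_sub_eq {b ρ : ℝ} (hρ : 1 < ρ) (hb : ρ < b) :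
    ∃ γ : ℝ, 0 < γ ∧ γ < 1 ∧ b ^ (1 - γ) = ρ := by
  have hb1 : 1 < b := hρ.trans hb
  refine ⟨1 - Real.logb b ρ, ?_, sub_lt_self _ (Real.logb_pos hb1 hρ), ?_⟩
  · rw [sub_pos, Real.logb_lt_iff_lt_rpow hb1 (by linarith), Real.rpow_one]
    exact hb
  · rw [sub_sub_cancel, Real.rpow_logb (by linarith) hb1.ne' (by linarith)]

/-- **Li–Sauermann theorem** (power-saving Sárközy theorem in function fields).
Fix a prime power `q` and a degree `d ≥ 1`. There exist constants `γ ∈ (0,1)` and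
`C > 0`, depending only on `q` and `d`, such that for every finite field `F` with `q`
elements, every polynomial `P ∈ F[X]` of degree `d` with zero constant term, and every
`n ≥ 1`: if `A ⊆ {f ∈ F[t] : deg f < n}` contains no pair `f, f + P(g)` with
`P(g) ≠ 0`, then `|A| ≤ C · (qⁿ)^{1−γ}`. -/
theorem li_sauermann (q d : ℕ) (hq : IsPrimePow q) (hd : 1 ≤ d) :
    ∃ γ C : ℝ, 0 < γ ∧ γ < 1 ∧ 0 < C ∧
      ∀ (F : Type) [Field F] [Fintype F], Fintype.card F = q →
        ∀ P : Polynomial F, P.natDegree = d → P.coeff 0 = 0 →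
          ∀ n : ℕ, 1 ≤ n → ∀ A : Finset (Polynomial F),
            (∀ f ∈ A, f.degree < (n : WithBot ℕ)) →
            (¬ ∃ f g : Polynomial F, f ∈ A ∧ P.comp g ≠ 0 ∧ f + P.comp g ∈ A) →
            (A.card : ℝ) ≤ C * ((q : ℝ) ^ n) ^ (1 - γ) := by
  obtain ⟨ρ, C, hρ1, hρq, hC, hbound⟩ := exists_two_mul_card_boundedExponents_le hq.two_le hd
  obtain ⟨γ, hγ0, hγ1, hγρ⟩ := exists_rpow_one_sub_eq hρ1 hρq
  refine ⟨γ, C, hγ0, hγ1, hC, ?_⟩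
  rintro F _ _ rfl P rfl hP0 n hn A hA hfree
  calc (#A : ℝ) ≤ 2 * #(boundedExponents (Fin n) (Fintype.card F)
        (countingDegree (Fintype.card F) P.natDegree n / 2)) := by
        exact_mod_cast card_le_two_mul_card_boundedExponents (by omega) hP0 hn hA hfree
    _ ≤ C * ρ ^ n := hbound n
    _ = C * ((Fintype.card F : ℝ) ^ n) ^ (1 - γ) := by
        rw [← hγρ, Real.rpow_pow_comm (by positivity)]
end

section
/- There exists an absolute constant C > 0 such that the following holds. Let p > 2 be a prime and let f₀, f₁, f₂ : 𝔽_p → ℂ be 1-bounded functions. Define Λ(f₀, f₁, f₂) := 𝔼_{x, y ∈ 𝔽_p} f₀(x) f₁(x + y) f₂(x + y²). Then |Λ(f₀, f₁, f₂)|⁴ ≤ C·(‖f₂‖_{U³} + 1/p). -/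
open scoped BigOperators

/-- The multiplicative discrete derivative `Δ_h f(x) = f(x) · conj(f(x+h))`. -/
noncomputable def mDeriv {G : Type*} [AddCommGroup G] (h : G) (f : G → ℂ) : G → ℂ :=
  fun x => f x * (starRingEnd ℂ) (f (x + h))

/-- The iterated multiplicative discrete derivative `Δ_{h₁,...,h_s} f`. -/
noncomputable def mDerivs {G : Type*} [AddCommGroup G] :
    (s : ℕ) → (Fin s → G) → (G → ℂ) → G → ℂ
  | 0, _, f => f
  | s + 1, h, f => mDerivs s (fun i => h i.succ) (mDeriv (h 0) f)

/-- The Gowers `U^s`-norm `‖f‖_{U^s} = (𝔼_{x,h₁,...,h_s} Δ_{h₁,...,h_s} f(x))^{1/2^s}`. -/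
noncomputable def gowersNorm {G : Type*} [AddCommGroup G] [Fintype G] (s : ℕ)
    (f : G → ℂ) : ℝ :=
  (((∑ x : G, ∑ h : Fin s → G, mDerivs s h f x) /
      (Fintype.card G : ℂ) ^ (s + 1)).re) ^ ((1 : ℝ) / 2 ^ s)


open Finset

namespace NRAux

/-- Cauchy-Schwarz with 1s. -/
lemma sq_sum_le {ι : Type*} [Fintype ι] (g : ι → ℝ) :
    (∑ i, g i) ^ 2 ≤ (Fintype.card ι : ℝ) * ∑ i, g i ^ 2 := by
  have := Finset.sum_mul_sq_le_sq_mul_sq Finset.univ (fun _ => (1 : ℝ)) g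
  simpa [Finset.card_univ] using this

variable {p : ℕ} [Fact p.Prime]

lemma sum_triple (g : ZMod p → ZMod p → ZMod p → ℂ) :
    ∑ t : ZMod p × ZMod p × ZMod p, g t.1 t.2.1 t.2.2 = ∑ a, ∑ b, ∑ c, g a b c := by
  calc ∑ t : ZMod p × ZMod p × ZMod p, g t.1 t.2.1 t.2.2
      = ∑ a, ∑ s : ZMod p × ZMod p, g a s.1 s.2 := Fintype.sum_prod_type _
    _ = ∑ a, ∑ b, ∑ c, g a b c := Finset.sum_congr rfl fun a _ => Fintype.sum_prod_type _

lemma sum3_reix (φ : ZMod p → ZMod p) (g : ZMod p → ZMod p → ZMod p → ℂ) :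
    ∑ v, ∑ y, ∑ y', g v y y' = ∑ k, ∑ u, ∑ y, g (u + φ y) y (y + k) := by
  let e : (ZMod p × ZMod p × ZMod p) ≃ (ZMod p × ZMod p × ZMod p) :=
    { toFun := fun t => (t.2.1 + φ t.2.2, t.2.2, t.2.2 + t.1)
      invFun := fun t => (t.2.2 - t.2.1, t.1 - φ t.2.1, t.2.1)
      left_inv := by rintro ⟨k, u, y⟩; simp
      right_inv := by rintro ⟨v, y, y'⟩; simp }
  calc ∑ v, ∑ y, ∑ y', g v y y'
      = ∑ t : ZMod p × ZMod p × ZMod p, g t.1 t.2.1 t.2.2 := (sum_triple g).symm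
    _ = ∑ t : ZMod p × ZMod p × ZMod p, g (t.2.1 + φ t.2.2) t.2.2 (t.2.2 + t.1) :=
        (Fintype.sum_equiv e (fun t => g (t.2.1 + φ t.2.2) t.2.2 (t.2.2 + t.1))
          (fun t => g t.1 t.2.1 t.2.2) (fun t => rfl)).symm
    _ = ∑ k, ∑ u, ∑ y, g (u + φ y) y (y + k) :=
        sum_triple (fun a b c => g (b + φ c) c (c + a))

lemma sum_addLeft (x : ZMod p) (F : ZMod p → ℂ) : ∑ m, F (x + m) = ∑ w, F w :=
  Fintype.sum_equiv (Equiv.addLeft x) _ _ fun m => rfl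

lemma sum_neg_mul (c : ZMod p) (hc : c ≠ 0) (F : ZMod p → ℂ) :
    ∑ k, F (-(c * k)) = ∑ k, F k :=
  Fintype.sum_equiv ((Equiv.mulLeft₀ c hc).trans (Equiv.neg _)) _ _ fun k => rfl

lemma sum_affine (u a : ZMod p) (ha : a ≠ 0) (F : ZMod p → ℂ) :
    ∑ y, F (u + a * y) = ∑ w, F w :=
  Fintype.sum_equiv ((Equiv.mulLeft₀ a ha).trans (Equiv.addLeft u)) _ _ fun y => rfl

/-- The basic Cauchy–Schwarz step. -/
lemma cs_inner (F : ZMod p → ℂ) (hF : ∀ x, ‖F x‖ ≤ 1) (T : ZMod p → ZMod p → ℂ) :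
    ‖∑ v, F v * ∑ y, T v y‖ ^ 2 ≤
      (p : ℝ) * ‖∑ v, ∑ y, ∑ y', T v y * (starRingEnd ℂ) (T v y')‖ := by
  have h1 : ‖∑ v, F v * ∑ y, T v y‖ ≤ ∑ v, ‖∑ y, T v y‖ := by
    refine (norm_sum_le _ _).trans (Finset.sum_le_sum fun v _ => ?_)
    rw [norm_mul]
    exact mul_le_of_le_one_left (norm_nonneg _) (hF v)
  have h2 : (∑ v, ‖∑ y, T v y‖) ^ 2 ≤ (p : ℝ) * ∑ v, ‖∑ y, T v y‖ ^ 2 := by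
    have := sq_sum_le (fun v : ZMod p => ‖∑ y, T v y‖)
    rwa [ZMod.card] at this
  have h3 : ∑ v, ‖∑ y, T v y‖ ^ 2
      = (∑ v, (∑ y, T v y) * (starRingEnd ℂ) (∑ y, T v y)).re := by
    rw [Complex.re_sum]
    refine Finset.sum_congr rfl fun v _ => ?_
    rw [Complex.mul_conj]
    simp [Complex.normSq_eq_norm_sq, ← Complex.ofReal_pow]
  have h4 : ∑ v, (∑ y, T v y) * (starRingEnd ℂ) (∑ y, T v y)
      = ∑ v, ∑ y, ∑ y', T v y * (starRingEnd ℂ) (T v y') := by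
    refine Finset.sum_congr rfl fun v _ => ?_
    rw [map_sum, Finset.sum_mul_sum]
  calc ‖∑ v, F v * ∑ y, T v y‖ ^ 2 ≤ (∑ v, ‖∑ y, T v y‖) ^ 2 :=
        pow_le_pow_left₀ (norm_nonneg _) h1 2
    _ ≤ (p : ℝ) * ∑ v, ‖∑ y, T v y‖ ^ 2 := h2
    _ = (p : ℝ) * (∑ v, ∑ y, ∑ y', T v y * (starRingEnd ℂ) (T v y')).re := by rw [h3, h4]
    _ ≤ (p : ℝ) * ‖∑ v, ∑ y, ∑ y', T v y * (starRingEnd ℂ) (T v y')‖ := by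
        have hre := Complex.re_le_norm (∑ v, ∑ y, ∑ y', T v y * (starRingEnd ℂ) (T v y'))
        have hp : (0 : ℝ) ≤ (p : ℝ) := Nat.cast_nonneg _
        nlinarith [hre]

lemma deriv_sum_eq (F : ZMod p → ℂ) :
    ∑ m, ∑ x, mDeriv m F x = ((‖∑ x, F x‖ ^ 2 : ℝ) : ℂ) := by
  have h0 : ∑ m, ∑ x, mDeriv m F x = ∑ x, ∑ m, F x * (starRingEnd ℂ) (F (x + m)) := by
    rw [Finset.sum_comm]; rfl
  rw [h0]
  calc ∑ x, ∑ m, F x * (starRingEnd ℂ) (F (x + m))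
      = ∑ x, F x * (starRingEnd ℂ) (∑ m, F (x + m)) := by
        refine Finset.sum_congr rfl fun x _ => ?_
        rw [map_sum, Finset.mul_sum]
    _ = ∑ x, F x * (starRingEnd ℂ) (∑ w, F w) := by
        refine Finset.sum_congr rfl fun x _ => by rw [sum_addLeft]
    _ = (∑ x, F x) * (starRingEnd ℂ) (∑ w, F w) := by rw [← Finset.sum_mul]
    _ = ((‖∑ x, F x‖ ^ 2 : ℝ) : ℂ) := by
        rw [Complex.mul_conj]
        simp [Complex.normSq_eq_norm_sq, ← Complex.ofReal_pow]


lemma vN_last (F G : ZMod p → ℂ) (hG : ∀ x, ‖G x‖ ≤ 1) (a : ZMod p) (ha : a ≠ 0) :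
    ‖∑ u, ∑ y, F u * G (u + a * y)‖ ^ 2 ≤ (p : ℝ) ^ 2 * (∑ m, ∑ x, mDeriv m F x).re := by
  have h1 : ∑ u, ∑ y, F u * G (u + a * y) = (∑ u, F u) * (∑ w, G w) := by
    calc ∑ u, ∑ y, F u * G (u + a * y) = ∑ u, F u * ∑ y, G (u + a * y) := by
          exact Finset.sum_congr rfl fun u _ => (Finset.mul_sum _ _ _).symm
      _ = ∑ u, F u * ∑ w, G w := by
          exact Finset.sum_congr rfl fun u _ => by rw [sum_affine u a ha]
      _ = (∑ u, F u) * (∑ w, G w) := by rw [← Finset.sum_mul]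
  have hG2 : ‖∑ w, G w‖ ≤ (p : ℝ) := by
    refine (norm_sum_le _ _).trans ?_
    calc ∑ w : ZMod p, ‖G w‖ ≤ ∑ w : ZMod p, 1 := Finset.sum_le_sum fun w _ => hG w
      _ = (p : ℝ) := by simp [ZMod.card]
  have h2 : ‖∑ u, ∑ y, F u * G (u + a * y)‖ ≤ (p : ℝ) * ‖∑ u, F u‖ := by
    rw [h1, norm_mul]
    have := norm_nonneg (∑ u, F u)
    nlinarith
  have h3 := deriv_sum_eq F
  calc ‖∑ u, ∑ y, F u * G (u + a * y)‖ ^ 2 ≤ ((p : ℝ) * ‖∑ u, F u‖) ^ 2 :=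
        pow_le_pow_left₀ (norm_nonneg _) h2 2
    _ = (p : ℝ) ^ 2 * ‖∑ u, F u‖ ^ 2 := by ring
    _ = (p : ℝ) ^ 2 * (∑ m, ∑ x, mDeriv m F x).re := by rw [h3, Complex.ofReal_re]

lemma cs_step (F G₁ G₂ : ZMod p → ℂ) (hG₂ : ∀ x, ‖G₂ x‖ ≤ 1) (b₁ b₂ : ZMod p) :
    ‖∑ u, ∑ y, F u * G₁ (u + b₁ * y) * G₂ (u + b₂ * y)‖ ^ 2 ≤
      (p : ℝ) * ∑ k, ‖∑ u, ∑ y, (F u * (starRingEnd ℂ) (F (u - b₂ * k))) *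
          (G₁ (u + b₁ * y) * (starRingEnd ℂ) (G₁ (u + b₁ * y + (b₁ - b₂) * k)))‖ := by
  set T : ZMod p → ZMod p → ℂ :=
    fun v y => F (v - b₂ * y) * G₁ (v + (b₁ - b₂) * y) with hT
  have rearr : ∑ u, ∑ y, F u * G₁ (u + b₁ * y) * G₂ (u + b₂ * y)
      = ∑ v, G₂ v * ∑ y, T v y := by
    calc ∑ u, ∑ y, F u * G₁ (u + b₁ * y) * G₂ (u + b₂ * y)
        = ∑ y, ∑ u, F u * G₁ (u + b₁ * y) * G₂ (u + b₂ * y) := Finset.sum_comm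
      _ = ∑ y, ∑ v, G₂ v * T v y := by
          refine Finset.sum_congr rfl fun y _ => ?_
          refine Fintype.sum_equiv (Equiv.addRight (b₂ * y)) _ _ fun u => ?_
          show F u * G₁ (u + b₁ * y) * G₂ (u + b₂ * y)
              = G₂ (u + b₂ * y) * (F (u + b₂ * y - b₂ * y) * G₁ (u + b₂ * y + (b₁ - b₂) * y))
          rw [show u + b₂ * y - b₂ * y = u from by ring,
              show u + b₂ * y + (b₁ - b₂) * y = u + b₁ * y from by ring]
          ring
      _ = ∑ v, ∑ y, G₂ v * T v y := Finset.sum_comm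
      _ = ∑ v, G₂ v * ∑ y, T v y :=
          Finset.sum_congr rfl fun v _ => (Finset.mul_sum _ _ _).symm
  rw [rearr]
  refine (cs_inner G₂ hG₂ T).trans ?_
  have e3 : (∑ v, ∑ y, ∑ y', T v y * (starRingEnd ℂ) (T v y'))
      = ∑ k, ∑ u, ∑ y, T (u + b₂ * y) y * (starRingEnd ℂ) (T (u + b₂ * y) (y + k)) :=
    sum3_reix (fun y => b₂ * y) (fun v y y' => T v y * (starRingEnd ℂ) (T v y'))
  rw [e3]
  have hmono : ‖∑ k, ∑ u, ∑ y, T (u + b₂ * y) y * (starRingEnd ℂ) (T (u + b₂ * y) (y + k))‖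
      ≤ ∑ k, ‖∑ u, ∑ y, (F u * (starRingEnd ℂ) (F (u - b₂ * k))) *
          (G₁ (u + b₁ * y) * (starRingEnd ℂ) (G₁ (u + b₁ * y + (b₁ - b₂) * k)))‖ := by
    refine (norm_sum_le _ _).trans (le_of_eq ?_)
    refine Finset.sum_congr rfl fun k _ => ?_
    congr 1
    refine Finset.sum_congr rfl fun u _ => Finset.sum_congr rfl fun y _ => ?_
    rw [hT]
    dsimp only
    rw [show u + b₂ * y - b₂ * y = u from by ring,
        show u + b₂ * y + (b₁ - b₂) * y = u + b₁ * y from by ring,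
        show u + b₂ * y - b₂ * (y + k) = u - b₂ * k from by ring,
        show u + b₂ * y + (b₁ - b₂) * (y + k) = u + b₁ * y + (b₁ - b₂) * k from by ring,
        map_mul]
    ring
  have hp : (0 : ℝ) ≤ (p : ℝ) := Nat.cast_nonneg _
  exact mul_le_mul_of_nonneg_left hmono hp

lemma cs_step4 (F G₁ G₂ G₃ : ZMod p → ℂ) (hG₃ : ∀ x, ‖G₃ x‖ ≤ 1) (b₁ b₂ b₃ : ZMod p) :
    ‖∑ u, ∑ y, F u * G₁ (u + b₁ * y) * G₂ (u + b₂ * y) * G₃ (u + b₃ * y)‖ ^ 2 ≤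
      (p : ℝ) * ∑ k, ‖∑ u, ∑ y, (F u * (starRingEnd ℂ) (F (u - b₃ * k))) *
          (G₁ (u + b₁ * y) * (starRingEnd ℂ) (G₁ (u + b₁ * y + (b₁ - b₃) * k))) *
          (G₂ (u + b₂ * y) * (starRingEnd ℂ) (G₂ (u + b₂ * y + (b₂ - b₃) * k)))‖ := by
  set T : ZMod p → ZMod p → ℂ :=
    fun v y => F (v - b₃ * y) * G₁ (v + (b₁ - b₃) * y) * G₂ (v + (b₂ - b₃) * y) with hT
  have rearr : ∑ u, ∑ y, F u * G₁ (u + b₁ * y) * G₂ (u + b₂ * y) * G₃ (u + b₃ * y)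
      = ∑ v, G₃ v * ∑ y, T v y := by
    calc ∑ u, ∑ y, F u * G₁ (u + b₁ * y) * G₂ (u + b₂ * y) * G₃ (u + b₃ * y)
        = ∑ y, ∑ u, F u * G₁ (u + b₁ * y) * G₂ (u + b₂ * y) * G₃ (u + b₃ * y) :=
          Finset.sum_comm
      _ = ∑ y, ∑ v, G₃ v * T v y := by
          refine Finset.sum_congr rfl fun y _ => ?_
          refine Fintype.sum_equiv (Equiv.addRight (b₃ * y)) _ _ fun u => ?_
          show F u * G₁ (u + b₁ * y) * G₂ (u + b₂ * y) * G₃ (u + b₃ * y)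
              = G₃ (u + b₃ * y) * (F (u + b₃ * y - b₃ * y) *
                  G₁ (u + b₃ * y + (b₁ - b₃) * y) * G₂ (u + b₃ * y + (b₂ - b₃) * y))
          rw [show u + b₃ * y - b₃ * y = u from by ring,
              show u + b₃ * y + (b₁ - b₃) * y = u + b₁ * y from by ring,
              show u + b₃ * y + (b₂ - b₃) * y = u + b₂ * y from by ring]
          ring
      _ = ∑ v, ∑ y, G₃ v * T v y := Finset.sum_comm
      _ = ∑ v, G₃ v * ∑ y, T v y :=
          Finset.sum_congr rfl fun v _ => (Finset.mul_sum _ _ _).symm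
  rw [rearr]
  refine (cs_inner G₃ hG₃ T).trans ?_
  have e3 : (∑ v, ∑ y, ∑ y', T v y * (starRingEnd ℂ) (T v y'))
      = ∑ k, ∑ u, ∑ y, T (u + b₃ * y) y * (starRingEnd ℂ) (T (u + b₃ * y) (y + k)) :=
    sum3_reix (fun y => b₃ * y) (fun v y y' => T v y * (starRingEnd ℂ) (T v y'))
  rw [e3]
  have hmono : ‖∑ k, ∑ u, ∑ y, T (u + b₃ * y) y * (starRingEnd ℂ) (T (u + b₃ * y) (y + k))‖
      ≤ ∑ k, ‖∑ u, ∑ y, (F u * (starRingEnd ℂ) (F (u - b₃ * k))) *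
          (G₁ (u + b₁ * y) * (starRingEnd ℂ) (G₁ (u + b₁ * y + (b₁ - b₃) * k))) *
          (G₂ (u + b₂ * y) * (starRingEnd ℂ) (G₂ (u + b₂ * y + (b₂ - b₃) * k)))‖ := by
    refine (norm_sum_le _ _).trans (le_of_eq ?_)
    refine Finset.sum_congr rfl fun k _ => ?_
    congr 1
    refine Finset.sum_congr rfl fun u _ => Finset.sum_congr rfl fun y _ => ?_
    rw [hT]
    dsimp only
    rw [show u + b₃ * y - b₃ * y = u from by ring,
        show u + b₃ * y + (b₁ - b₃) * y = u + b₁ * y from by ring,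
        show u + b₃ * y + (b₂ - b₃) * y = u + b₂ * y from by ring,
        show u + b₃ * y - b₃ * (y + k) = u - b₃ * k from by ring,
        show u + b₃ * y + (b₁ - b₃) * (y + k) = u + b₁ * y + (b₁ - b₃) * k from by ring,
        show u + b₃ * y + (b₂ - b₃) * (y + k) = u + b₂ * y + (b₂ - b₃) * k from by ring,
        map_mul, map_mul]
    ring
  have hp : (0 : ℝ) ≤ (p : ℝ) := Nat.cast_nonneg _
  exact mul_le_mul_of_nonneg_left hmono hp


lemma mDerivs_three (f : ZMod p → ℂ) (h : Fin 3 → ZMod p) :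
    mDerivs 3 h f = mDeriv (h 2) (mDeriv (h 1) (mDeriv (h 0) f)) := rfl

lemma U8_expand (f : ZMod p → ℂ) :
    ∑ x, ∑ h : Fin 3 → ZMod p, mDerivs 3 h f x
      = ∑ a, ∑ b, ∑ c, ∑ x, mDeriv c (mDeriv b (mDeriv a f)) x := by
  rw [Finset.sum_comm]
  let e : (Fin 3 → ZMod p) ≃ (ZMod p × ZMod p × ZMod p) :=
    { toFun := fun h => (h 0, h 1, h 2)
      invFun := fun t => ![t.1, t.2.1, t.2.2]
      left_inv := by intro h; funext i; fin_cases i <;> rfl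
      right_inv := by rintro ⟨a, b, c⟩; rfl }
  calc ∑ h : Fin 3 → ZMod p, ∑ x, mDerivs 3 h f x
      = ∑ t : ZMod p × ZMod p × ZMod p, ∑ x, mDeriv t.2.2 (mDeriv t.2.1 (mDeriv t.1 f)) x := by
        refine Fintype.sum_equiv e _ _ fun h => ?_
        rw [mDerivs_three]
        rfl
    _ = ∑ a, ∑ b, ∑ c, ∑ x, mDeriv c (mDeriv b (mDeriv a f)) x :=
        sum_triple (fun a b c => ∑ x, mDeriv c (mDeriv b (mDeriv a f)) x)

lemma U8_repr (f : ZMod p → ℂ) :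
    ∑ x, ∑ h : Fin 3 → ZMod p, mDerivs 3 h f x
      = ((∑ a, ∑ b, ‖∑ x, mDeriv b (mDeriv a f) x‖ ^ 2 : ℝ) : ℂ) := by
  rw [U8_expand]
  calc ∑ a, ∑ b, ∑ c, ∑ x, mDeriv c (mDeriv b (mDeriv a f)) x
      = ∑ a, ∑ b, ((‖∑ x, mDeriv b (mDeriv a f) x‖ ^ 2 : ℝ) : ℂ) :=
        Finset.sum_congr rfl fun a _ => Finset.sum_congr rfl fun b _ =>
          deriv_sum_eq (mDeriv b (mDeriv a f))
    _ = ((∑ a, ∑ b, ‖∑ x, mDeriv b (mDeriv a f) x‖ ^ 2 : ℝ) : ℂ) := by norm_cast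

lemma vN (f g₁ g₂ g₃ : ZMod p → ℂ) (hg₁ : ∀ x, ‖g₁ x‖ ≤ 1) (hg₂ : ∀ x, ‖g₂ x‖ ≤ 1)
    (hg₃ : ∀ x, ‖g₃ x‖ ≤ 1) (a₁ a₂ a₃ : ZMod p)
    (ha₁ : a₁ ≠ 0) (ha₂ : a₂ ≠ 0) (ha₃ : a₃ ≠ 0) :
    ‖∑ u, ∑ y, f u * g₁ (u + a₁ * y) * g₂ (u + a₂ * y) * g₃ (u + a₃ * y)‖ ^ 8 ≤
      (p : ℝ) ^ 12 * (∑ x, ∑ h : Fin 3 → ZMod p, mDerivs 3 h f x).re := by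
  have hcnj : ∀ z : ℂ, ‖(starRingEnd ℂ) z‖ = ‖z‖ := fun z => RCLike.norm_conj z
  set n : ℝ := (p : ℝ) with hn
  have hn0 : 0 ≤ n := Nat.cast_nonneg _
  -- level 1
  set T1 : ZMod p → ℂ := fun k => ∑ u, ∑ y,
      (f u * (starRingEnd ℂ) (f (u - a₃ * k))) *
      (g₁ (u + a₁ * y) * (starRingEnd ℂ) (g₁ (u + a₁ * y + (a₁ - a₃) * k))) *
      (g₂ (u + a₂ * y) * (starRingEnd ℂ) (g₂ (u + a₂ * y + (a₂ - a₃) * k))) with hT1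
  have step1 : ‖∑ u, ∑ y, f u * g₁ (u + a₁ * y) * g₂ (u + a₂ * y) * g₃ (u + a₃ * y)‖ ^ 2
      ≤ n * ∑ k, ‖T1 k‖ := cs_step4 f g₁ g₂ g₃ hg₃ a₁ a₂ a₃
  -- level 2
  set T2 : ZMod p → ZMod p → ℂ := fun k l => ∑ u, ∑ y,
      ((f u * (starRingEnd ℂ) (f (u - a₃ * k))) *
        (starRingEnd ℂ) (f (u - a₂ * l) * (starRingEnd ℂ) (f (u - a₂ * l - a₃ * k)))) *
      ((g₁ (u + a₁ * y) * (starRingEnd ℂ) (g₁ (u + a₁ * y + (a₁ - a₃) * k))) *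
        (starRingEnd ℂ) (g₁ (u + a₁ * y + (a₁ - a₂) * l) *
          (starRingEnd ℂ) (g₁ (u + a₁ * y + (a₁ - a₂) * l + (a₁ - a₃) * k)))) with hT2
  have step2 : ∀ k, ‖T1 k‖ ^ 2 ≤ n * ∑ l, ‖T2 k l‖ := by
    intro k
    have hb : ∀ x, ‖g₂ x * (starRingEnd ℂ) (g₂ (x + (a₂ - a₃) * k))‖ ≤ 1 := by
      intro x
      rw [norm_mul, hcnj]
      exact mul_le_one₀ (hg₂ x) (norm_nonneg _) (hg₂ _)
    exact cs_step (fun u => f u * (starRingEnd ℂ) (f (u - a₃ * k)))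
      (fun t => g₁ t * (starRingEnd ℂ) (g₁ (t + (a₁ - a₃) * k)))
      (fun t => g₂ t * (starRingEnd ℂ) (g₂ (t + (a₂ - a₃) * k))) hb a₁ a₂
  -- level 3
  set FF : ZMod p → ZMod p → ZMod p → ℂ := fun k l u =>
      (f u * (starRingEnd ℂ) (f (u - a₃ * k))) *
        (starRingEnd ℂ) (f (u - a₂ * l) * (starRingEnd ℂ) (f (u - a₂ * l - a₃ * k))) with hFF
  have step3 : ∀ k l, ‖T2 k l‖ ^ 2 ≤ n ^ 2 * (∑ m, ∑ x, mDeriv m (FF k l) x).re := by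
    intro k l
    have hb : ∀ x, ‖(g₁ x * (starRingEnd ℂ) (g₁ (x + (a₁ - a₃) * k))) *
        (starRingEnd ℂ) (g₁ (x + (a₁ - a₂) * l) *
          (starRingEnd ℂ) (g₁ (x + (a₁ - a₂) * l + (a₁ - a₃) * k)))‖ ≤ 1 := by
      intro x
      rw [norm_mul, hcnj, norm_mul, hcnj, norm_mul, hcnj]
      exact mul_le_one₀
        (mul_le_one₀ (hg₁ x) (norm_nonneg _) (hg₁ _))
        (mul_nonneg (norm_nonneg _) (norm_nonneg _))
        (mul_le_one₀ (hg₁ _) (norm_nonneg _) (hg₁ _))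
    exact vN_last (FF k l)
      (fun t => (g₁ t * (starRingEnd ℂ) (g₁ (t + (a₁ - a₃) * k))) *
        (starRingEnd ℂ) (g₁ (t + (a₁ - a₂) * l) *
          (starRingEnd ℂ) (g₁ (t + (a₁ - a₂) * l + (a₁ - a₃) * k)))) hb a₁ ha₁
  -- identify FF with iterated derivatives
  have hFFd : ∀ k l, FF k l = mDeriv (-(a₂ * l)) (mDeriv (-(a₃ * k)) f) := by
    intro k l
    funext u
    simp only [hFF, mDeriv, sub_eq_add_neg]
  -- the sum of the W's equals the U³ sum
  have key : ∑ k, ∑ l, ∑ m, ∑ x, mDeriv m (FF k l) x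
      = ∑ x, ∑ h : Fin 3 → ZMod p, mDerivs 3 h f x := by
    rw [U8_expand]
    calc ∑ k, ∑ l, ∑ m, ∑ x, mDeriv m (FF k l) x
        = ∑ k, ∑ l, ∑ m, ∑ x, mDeriv m (mDeriv (-(a₂ * l)) (mDeriv (-(a₃ * k)) f)) x := by
          refine Finset.sum_congr rfl fun k _ => Finset.sum_congr rfl fun l _ => ?_
          rw [hFFd]
      _ = ∑ k, ∑ l, ∑ m, ∑ x, mDeriv m (mDeriv l (mDeriv (-(a₃ * k)) f)) x := by
          refine Finset.sum_congr rfl fun k _ => ?_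
          exact sum_neg_mul a₂ ha₂
            (fun l => ∑ m, ∑ x, mDeriv m (mDeriv l (mDeriv (-(a₃ * k)) f)) x)
      _ = ∑ a, ∑ b, ∑ c, ∑ x, mDeriv c (mDeriv b (mDeriv a f)) x :=
          sum_neg_mul a₃ ha₃
            (fun a => ∑ b, ∑ c, ∑ x, mDeriv c (mDeriv b (mDeriv a f)) x)
  -- nonnegativity of the W's
  have hWnn : ∀ k l, 0 ≤ (∑ m, ∑ x, mDeriv m (FF k l) x).re := by
    intro k l
    rw [deriv_sum_eq, Complex.ofReal_re]
    positivity
  -- now the numeric chain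
  have c1 : ‖∑ u, ∑ y, f u * g₁ (u + a₁ * y) * g₂ (u + a₂ * y) * g₃ (u + a₃ * y)‖ ^ 4
      ≤ n ^ 4 * ∑ k, ∑ l, ‖T2 k l‖ := by
    have e1 : (∑ k, ‖T1 k‖) ^ 2 ≤ n * ∑ k, ‖T1 k‖ ^ 2 := by
      have := sq_sum_le (fun k : ZMod p => ‖T1 k‖); rwa [ZMod.card] at this
    have e2 : ∑ k, ‖T1 k‖ ^ 2 ≤ ∑ k, (n * ∑ l, ‖T2 k l‖) :=
      Finset.sum_le_sum fun k _ => step2 k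
    calc ‖∑ u, ∑ y, f u * g₁ (u + a₁ * y) * g₂ (u + a₂ * y) * g₃ (u + a₃ * y)‖ ^ 4
        = (‖∑ u, ∑ y, f u * g₁ (u + a₁ * y) * g₂ (u + a₂ * y) * g₃ (u + a₃ * y)‖ ^ 2) ^ 2 := by
          ring
      _ ≤ (n * ∑ k, ‖T1 k‖) ^ 2 := pow_le_pow_left₀ (by positivity) step1 2
      _ = n ^ 2 * (∑ k, ‖T1 k‖) ^ 2 := by ring
      _ ≤ n ^ 2 * (n * ∑ k, ‖T1 k‖ ^ 2) :=
          mul_le_mul_of_nonneg_left e1 (by positivity)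
      _ ≤ n ^ 2 * (n * ∑ k, (n * ∑ l, ‖T2 k l‖)) :=
          mul_le_mul_of_nonneg_left (mul_le_mul_of_nonneg_left e2 hn0) (by positivity)
      _ = n ^ 4 * ∑ k, ∑ l, ‖T2 k l‖ := by
          rw [← Finset.mul_sum]; ring
  have c2 : (∑ k, ∑ l, ‖T2 k l‖) ^ 2 ≤ n ^ 2 * ∑ k, ∑ l, ‖T2 k l‖ ^ 2 := by
    have e1 : (∑ k, ∑ l, ‖T2 k l‖) ^ 2 ≤ n * ∑ k, (∑ l, ‖T2 k l‖) ^ 2 := by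
      have := sq_sum_le (fun k : ZMod p => ∑ l, ‖T2 k l‖); rwa [ZMod.card] at this
    have e2 : ∑ k, (∑ l, ‖T2 k l‖) ^ 2 ≤ ∑ k, (n * ∑ l, ‖T2 k l‖ ^ 2) := by
      refine Finset.sum_le_sum fun k _ => ?_
      have := sq_sum_le (fun l : ZMod p => ‖T2 k l‖); rwa [ZMod.card] at this
    calc (∑ k, ∑ l, ‖T2 k l‖) ^ 2 ≤ n * ∑ k, (∑ l, ‖T2 k l‖) ^ 2 := e1
      _ ≤ n * ∑ k, (n * ∑ l, ‖T2 k l‖ ^ 2) := by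
          refine mul_le_mul_of_nonneg_left e2 hn0
      _ = n ^ 2 * ∑ k, ∑ l, ‖T2 k l‖ ^ 2 := by rw [← Finset.mul_sum]; ring
  have c3 : ∑ k, ∑ l, ‖T2 k l‖ ^ 2
      ≤ n ^ 2 * (∑ x, ∑ h : Fin 3 → ZMod p, mDerivs 3 h f x).re := by
    calc ∑ k, ∑ l, ‖T2 k l‖ ^ 2
        ≤ ∑ k, ∑ l, n ^ 2 * (∑ m, ∑ x, mDeriv m (FF k l) x).re :=
          Finset.sum_le_sum fun k _ => Finset.sum_le_sum fun l _ => step3 k l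
      _ = n ^ 2 * ∑ k, ∑ l, (∑ m, ∑ x, mDeriv m (FF k l) x).re := by
          rw [Finset.mul_sum]
          exact Finset.sum_congr rfl fun k _ => (Finset.mul_sum _ _ _).symm
      _ = n ^ 2 * (∑ x, ∑ h : Fin 3 → ZMod p, mDerivs 3 h f x).re := by
          rw [← key]
          rw [Complex.re_sum]
          congr 1
          exact Finset.sum_congr rfl fun k _ => (Complex.re_sum _ _).symm
  -- assemble
  have hT2nn : 0 ≤ ∑ k, ∑ l, ‖T2 k l‖ :=
    Finset.sum_nonneg fun k _ => Finset.sum_nonneg fun l _ => norm_nonneg _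
  calc ‖∑ u, ∑ y, f u * g₁ (u + a₁ * y) * g₂ (u + a₂ * y) * g₃ (u + a₃ * y)‖ ^ 8
      = (‖∑ u, ∑ y, f u * g₁ (u + a₁ * y) * g₂ (u + a₂ * y) * g₃ (u + a₃ * y)‖ ^ 4) ^ 2 := by
        ring
    _ ≤ (n ^ 4 * ∑ k, ∑ l, ‖T2 k l‖) ^ 2 := pow_le_pow_left₀ (by positivity) c1 2
    _ = n ^ 8 * (∑ k, ∑ l, ‖T2 k l‖) ^ 2 := by ring
    _ ≤ n ^ 8 * (n ^ 2 * ∑ k, ∑ l, ‖T2 k l‖ ^ 2) :=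
        mul_le_mul_of_nonneg_left c2 (by positivity)
    _ ≤ n ^ 8 * (n ^ 2 * (n ^ 2 * (∑ x, ∑ h : Fin 3 → ZMod p, mDerivs 3 h f x).re)) :=
        mul_le_mul_of_nonneg_left (mul_le_mul_of_nonneg_left c3 (by positivity)) (by positivity)
    _ = n ^ 12 * (∑ x, ∑ h : Fin 3 → ZMod p, mDerivs 3 h f x).re := by ring


/-- The quantity arising after the first Cauchy–Schwarz. -/
noncomputable def AA (f₀ f₂ : ZMod p → ℂ) (h : ZMod p) : ℂ :=
  ∑ u, ∑ y, (f₀ u * f₂ (u + y ^ 2)) *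
    (starRingEnd ℂ) (f₀ (u - h) * f₂ (u - h + (y + h) ^ 2))

/-- The quantity arising after the second Cauchy–Schwarz. -/
noncomputable def BB (f₂ : ZMod p → ℂ) (h d : ZMod p) : ℂ :=
  ∑ u, ∑ y, (f₂ u * (starRingEnd ℂ) (f₂ (u + 2 * h * y + (h ^ 2 - h)))) *
    (starRingEnd ℂ) (f₂ (u + 2 * d * y + d ^ 2) *
      (starRingEnd ℂ) (f₂ (u + 2 * (d + h) * y + ((d + h) ^ 2 - h))))

lemma stepA (f₀ f₁ f₂ : ZMod p → ℂ) (hf₁ : ∀ x, ‖f₁ x‖ ≤ 1) :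
    ‖∑ x, ∑ y, f₀ x * f₁ (x + y) * f₂ (x + y ^ 2)‖ ^ 2 ≤
      (p : ℝ) * ∑ h, ‖AA f₀ f₂ h‖ := by
  set T : ZMod p → ZMod p → ℂ := fun z y => f₀ (z - y) * f₂ (z - y + y ^ 2) with hT
  have rearr : ∑ x, ∑ y, f₀ x * f₁ (x + y) * f₂ (x + y ^ 2) = ∑ z, f₁ z * ∑ y, T z y := by
    calc ∑ x, ∑ y, f₀ x * f₁ (x + y) * f₂ (x + y ^ 2)
        = ∑ y, ∑ x, f₀ x * f₁ (x + y) * f₂ (x + y ^ 2) := Finset.sum_comm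
      _ = ∑ y, ∑ z, f₁ z * T z y := by
          refine Finset.sum_congr rfl fun y _ => ?_
          refine Fintype.sum_equiv (Equiv.addRight y) _ _ fun x => ?_
          show f₀ x * f₁ (x + y) * f₂ (x + y ^ 2)
              = f₁ (x + y) * (f₀ (x + y - y) * f₂ (x + y - y + y ^ 2))
          rw [show x + y - y = x from by ring]
          ring
      _ = ∑ z, ∑ y, f₁ z * T z y := Finset.sum_comm
      _ = ∑ z, f₁ z * ∑ y, T z y :=
          Finset.sum_congr rfl fun z _ => (Finset.mul_sum _ _ _).symm
  rw [rearr]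
  refine (cs_inner f₁ hf₁ T).trans ?_
  have e3 : (∑ v, ∑ y, ∑ y', T v y * (starRingEnd ℂ) (T v y'))
      = ∑ k, ∑ u, ∑ y, T (u + y) y * (starRingEnd ℂ) (T (u + y) (y + k)) :=
    sum3_reix (fun y => y) (fun v y y' => T v y * (starRingEnd ℂ) (T v y'))
  rw [e3]
  have hmono : ‖∑ k, ∑ u, ∑ y, T (u + y) y * (starRingEnd ℂ) (T (u + y) (y + k))‖
      ≤ ∑ k, ‖AA f₀ f₂ k‖ := by
    refine (norm_sum_le _ _).trans (le_of_eq ?_)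
    refine Finset.sum_congr rfl fun k _ => ?_
    congr 1
    refine Finset.sum_congr rfl fun u _ => Finset.sum_congr rfl fun y _ => ?_
    rw [hT]
    dsimp only
    rw [show u + y - y = u from by ring,
        show u + y - (y + k) = u - k from by ring]
  exact mul_le_mul_of_nonneg_left hmono (Nat.cast_nonneg _)

lemma stepB (f₀ f₂ : ZMod p → ℂ) (hf₀ : ∀ x, ‖f₀ x‖ ≤ 1) (h : ZMod p) :
    ‖AA f₀ f₂ h‖ ^ 2 ≤ (p : ℝ) * ∑ d, ‖BB f₂ h d‖ := by
  have hcnj : ∀ z : ℂ, ‖(starRingEnd ℂ) z‖ = ‖z‖ := fun z => RCLike.norm_conj z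
  set T : ZMod p → ZMod p → ℂ :=
    fun u y => f₂ (u + y ^ 2) * (starRingEnd ℂ) (f₂ (u - h + (y + h) ^ 2)) with hT
  have rearr : AA f₀ f₂ h = ∑ u, (f₀ u * (starRingEnd ℂ) (f₀ (u - h))) * ∑ y, T u y := by
    rw [AA]
    calc ∑ u, ∑ y, (f₀ u * f₂ (u + y ^ 2)) *
          (starRingEnd ℂ) (f₀ (u - h) * f₂ (u - h + (y + h) ^ 2))
        = ∑ u, ∑ y, (f₀ u * (starRingEnd ℂ) (f₀ (u - h))) * T u y := by
          refine Finset.sum_congr rfl fun u _ => Finset.sum_congr rfl fun y _ => ?_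
          rw [hT]
          dsimp only
          rw [map_mul]
          ring
      _ = ∑ u, (f₀ u * (starRingEnd ℂ) (f₀ (u - h))) * ∑ y, T u y :=
          Finset.sum_congr rfl fun u _ => (Finset.mul_sum _ _ _).symm
  rw [rearr]
  have hFb : ∀ x, ‖f₀ x * (starRingEnd ℂ) (f₀ (x - h))‖ ≤ 1 := by
    intro x
    rw [norm_mul, hcnj]
    exact mul_le_one₀ (hf₀ x) (norm_nonneg _) (hf₀ _)
  refine (cs_inner _ hFb T).trans ?_
  have e3 : (∑ v, ∑ y, ∑ y', T v y * (starRingEnd ℂ) (T v y'))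
      = ∑ k, ∑ u, ∑ y, T (u + -y ^ 2) y * (starRingEnd ℂ) (T (u + -y ^ 2) (y + k)) :=
    sum3_reix (fun y => -y ^ 2) (fun v y y' => T v y * (starRingEnd ℂ) (T v y'))
  rw [e3]
  have hmono : ‖∑ k, ∑ u, ∑ y, T (u + -y ^ 2) y * (starRingEnd ℂ) (T (u + -y ^ 2) (y + k))‖
      ≤ ∑ d, ‖BB f₂ h d‖ := by
    refine (norm_sum_le _ _).trans (le_of_eq ?_)
    refine Finset.sum_congr rfl fun d _ => ?_
    congr 1
    rw [BB]
    refine Finset.sum_congr rfl fun u _ => Finset.sum_congr rfl fun y _ => ?_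
    rw [hT]
    dsimp only
    rw [show u + -y ^ 2 + y ^ 2 = u from by ring,
        show u + -y ^ 2 - h + (y + h) ^ 2 = u + 2 * h * y + (h ^ 2 - h) from by ring,
        show u + -y ^ 2 + (y + d) ^ 2 = u + 2 * d * y + d ^ 2 from by ring,
        show u + -y ^ 2 - h + (y + d + h) ^ 2
            = u + 2 * (d + h) * y + ((d + h) ^ 2 - h) from by ring]
  exact mul_le_mul_of_nonneg_left hmono (Nat.cast_nonneg _)

lemma BB_le (f₂ : ZMod p → ℂ) (hf₂ : ∀ x, ‖f₂ x‖ ≤ 1) (h d : ZMod p) :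
    ‖BB f₂ h d‖ ≤ (p : ℝ) ^ 2 := by
  rw [BB]
  refine (norm_sum_le _ _).trans ?_
  calc ∑ u : ZMod p, ‖∑ y, (f₂ u * (starRingEnd ℂ) (f₂ (u + 2 * h * y + (h ^ 2 - h)))) *
        (starRingEnd ℂ) (f₂ (u + 2 * d * y + d ^ 2) *
          (starRingEnd ℂ) (f₂ (u + 2 * (d + h) * y + ((d + h) ^ 2 - h))))‖
      ≤ ∑ u : ZMod p, ∑ y : ZMod p, (1 : ℝ) := by
        refine Finset.sum_le_sum fun u _ => (norm_sum_le _ _).trans ?_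
        refine Finset.sum_le_sum fun y _ => ?_
        simp only [norm_mul, RCLike.norm_conj]
        exact mul_le_one₀ (mul_le_one₀ (hf₂ _) (norm_nonneg _) (hf₂ _))
          (mul_nonneg (norm_nonneg _) (norm_nonneg _))
          (mul_le_one₀ (hf₂ _) (norm_nonneg _) (hf₂ _))
    _ = (p : ℝ) ^ 2 := by
        simp [Finset.sum_const, Finset.card_univ, ZMod.card]
        ring

lemma stepC (f₂ : ZMod p → ℂ) (hf₂ : ∀ x, ‖f₂ x‖ ≤ 1) (hp : 2 < p) (h d : ZMod p)
    (hh : h ≠ 0) (hd : d ≠ 0) (hdh : d + h ≠ 0) :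
    ‖BB f₂ h d‖ ^ 8 ≤ (p : ℝ) ^ 12 * (∑ x, ∑ h' : Fin 3 → ZMod p, mDerivs 3 h' f₂ x).re := by
  have hcnj : ∀ z : ℂ, ‖(starRingEnd ℂ) z‖ = ‖z‖ := fun z => RCLike.norm_conj z
  have h2 : (2 : ZMod p) ≠ 0 := by
    intro hz
    have h3 : ((2 : ℕ) : ZMod p) = 0 := by exact_mod_cast hz
    rw [ZMod.natCast_eq_zero_iff] at h3
    have := Nat.le_of_dvd (by norm_num) h3
    omega
  set g1 : ZMod p → ℂ := fun t => (starRingEnd ℂ) (f₂ (t + (h ^ 2 - h))) with hg1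
  set g2 : ZMod p → ℂ := fun t => (starRingEnd ℂ) (f₂ (t + d ^ 2)) with hg2
  set g3 : ZMod p → ℂ := fun t => f₂ (t + ((d + h) ^ 2 - h)) with hg3
  have hb1 : ∀ x, ‖g1 x‖ ≤ 1 := fun x => by rw [hg1]; dsimp only; rw [hcnj]; exact hf₂ _
  have hb2 : ∀ x, ‖g2 x‖ ≤ 1 := fun x => by rw [hg2]; dsimp only; rw [hcnj]; exact hf₂ _
  have hb3 : ∀ x, ‖g3 x‖ ≤ 1 := fun x => by rw [hg3]; dsimp only; exact hf₂ _
  have hBB : BB f₂ h d = ∑ u, ∑ y,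
      f₂ u * g1 (u + 2 * h * y) * g2 (u + 2 * d * y) * g3 (u + 2 * (d + h) * y) := by
    rw [BB]
    refine Finset.sum_congr rfl fun u _ => Finset.sum_congr rfl fun y _ => ?_
    rw [hg1, hg2, hg3]
    dsimp only
    rw [map_mul, starRingEnd_self_apply]
    ring
  rw [hBB]
  exact vN f₂ g1 g2 g3 hb1 hb2 hb3 (2 * h) (2 * d) (2 * (d + h))
    (mul_ne_zero h2 hh) (mul_ne_zero h2 hd) (mul_ne_zero h2 hdh)

end NRAux



set_option maxHeartbeats 1000000 in
/-- **Control of the nonlinear Roth counting operator by the `U³`-norm.** There is an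
absolute constant `C > 0` such that for every prime `p > 2` and all `1`-bounded
`f₀, f₁, f₂ : 𝔽_p → ℂ`, the trilinear average
`Λ(f₀,f₁,f₂) = 𝔼_{x,y} f₀(x) f₁(x+y) f₂(x+y²)` satisfies
`|Λ(f₀,f₁,f₂)|⁴ ≤ C·(‖f₂‖_{U³} + 1/p)`. -/
theorem nonlinear_roth_u3_control :
    ∃ C : ℝ, 0 < C ∧
      ∀ (p : ℕ) [Fact p.Prime], 2 < p → ∀ f₀ f₁ f₂ : ZMod p → ℂ,
        (∀ x, ‖f₀ x‖ ≤ 1) → (∀ x, ‖f₁ x‖ ≤ 1) →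
        (∀ x, ‖f₂ x‖ ≤ 1) →
        ‖(∑ x : ZMod p, ∑ y : ZMod p, f₀ x * f₁ (x + y) * f₂ (x + y ^ 2)) /
            (p : ℂ) ^ 2‖ ^ 4 ≤
          C * (gowersNorm 3 f₂ + 1 / p) := by
  refine ⟨4, by norm_num, ?_⟩
  intro p _inst hp f₀ f₁ f₂ h₀ h₁ h₂
  have hf₀ : ∀ x, ‖f₀ x‖ ≤ 1 := fun x => h₀ x
  have hf₁ : ∀ x, ‖f₁ x‖ ≤ 1 := fun x => h₁ x
  have hf₂ : ∀ x, ‖f₂ x‖ ≤ 1 := fun x => h₂ x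
  set n : ℝ := (p : ℝ) with hn
  have hn0 : (0 : ℝ) < n := by
    have : (0 : ℕ) < p := by omega
    rw [hn]; exact_mod_cast this
  -- the U³ sum as a nonnegative real
  set r : ℝ := ∑ a : ZMod p, ∑ b : ZMod p, ‖∑ x : ZMod p, mDeriv b (mDeriv a f₂) x‖ ^ 2
    with hr
  have hr0 : (0 : ℝ) ≤ r := by
    rw [hr]
    exact Finset.sum_nonneg fun a _ => Finset.sum_nonneg fun b _ => sq_nonneg _
  have hU := NRAux.U8_repr (p := p) f₂
  rw [← hr] at hU
  have hre : (∑ x : ZMod p, ∑ h : Fin 3 → ZMod p, mDerivs 3 h f₂ x).re = r := by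
    rw [hU]; exact Complex.ofReal_re _
  -- the Gowers norm
  set g : ℝ := gowersNorm 3 f₂ with hgdef
  have hgval : g = (r / n ^ 4) ^ ((1 : ℝ) / 8) := by
    rw [hgdef]
    unfold gowersNorm
    rw [hU, ZMod.card]
    have e1 : ((p : ℕ) : ℂ) ^ (3 + 1) = (((n ^ 4 : ℝ)) : ℂ) := by
      rw [hn]; push_cast; ring
    rw [e1, ← Complex.ofReal_div, Complex.ofReal_re]
    norm_num
  have hg0 : (0 : ℝ) ≤ g := by rw [hgval]; positivity
  have hg8 : g ^ (8 : ℕ) = r / n ^ 4 := by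
    rw [hgval, ← Real.rpow_natCast ((r / n ^ 4) ^ ((1 : ℝ) / 8)) 8,
      ← Real.rpow_mul (by positivity : (0 : ℝ) ≤ r / n ^ 4)]
    norm_num
  -- the good bound
  have hgood : ∀ h d : ZMod p, h ≠ 0 → d ≠ 0 → d + h ≠ 0 →
      ‖NRAux.BB f₂ h d‖ ≤ n ^ 2 * g := by
    intro h d hh hd hdh
    have h8 := NRAux.stepC f₂ hf₂ hp h d hh hd hdh
    rw [hre] at h8
    refine le_of_pow_le_pow_left₀ (n := 8) (by norm_num) (by positivity) ?_
    calc ‖NRAux.BB f₂ h d‖ ^ 8 ≤ (p : ℝ) ^ 12 * r := h8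
      _ = (n ^ 2 * g) ^ 8 := by
          rw [mul_pow, hg8, ← hn]
          field_simp
  -- per-pair bound
  have hpair : ∀ h d : ZMod p, ‖NRAux.BB f₂ h d‖ ≤ n ^ 2 * g +
      ((if h = 0 then n ^ 2 else 0) + (if d = 0 then n ^ 2 else 0) +
        (if d + h = 0 then n ^ 2 else 0)) := by
    intro h d
    have htriv := NRAux.BB_le f₂ hf₂ h d
    rw [← hn] at htriv
    have hgg : (0 : ℝ) ≤ n ^ 2 * g := by positivity
    have j1 : (0 : ℝ) ≤ (if h = 0 then n ^ 2 else 0) := by split <;> positivity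
    have j2 : (0 : ℝ) ≤ (if d = 0 then n ^ 2 else 0) := by split <;> positivity
    have j3 : (0 : ℝ) ≤ (if d + h = 0 then n ^ 2 else 0) := by split <;> positivity
    by_cases hh : h = 0
    · rw [if_pos hh]; linarith
    by_cases hd : d = 0
    · rw [if_pos hd]; linarith
    by_cases hdh : d + h = 0
    · rw [if_pos hdh]; linarith
    · rw [if_neg hh, if_neg hd, if_neg hdh]
      have := hgood h d hh hd hdh
      linarith
  -- summing the per-pair bound
  have hconst : ∀ c : ℝ, ∑ _x : ZMod p, c = n * c := fun c => by
    rw [Finset.sum_const, Finset.card_univ, ZMod.card, nsmul_eq_mul, hn]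
  have I0 : ∑ h : ZMod p, (if h = 0 then n ^ 2 else (0 : ℝ)) = n ^ 2 := by
    rw [Finset.sum_ite_eq' Finset.univ (0 : ZMod p) (fun _ => n ^ 2)]
    simp
  have I1 : ∀ h : ZMod p, ∑ d : ZMod p, (if d + h = 0 then n ^ 2 else (0 : ℝ)) = n ^ 2 := by
    intro h
    simp only [add_eq_zero_iff_eq_neg]
    rw [Finset.sum_ite_eq' Finset.univ (-h : ZMod p) (fun _ => n ^ 2)]
    simp
  have hsum : ∑ h : ZMod p, ∑ d : ZMod p, ‖NRAux.BB f₂ h d‖ ≤ n ^ 4 * g + 3 * n ^ 3 := by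
    have hb : ∑ h : ZMod p, ∑ d : ZMod p, ‖NRAux.BB f₂ h d‖ ≤
        ∑ h : ZMod p, ∑ d : ZMod p, (n ^ 2 * g +
          ((if h = 0 then n ^ 2 else 0) + (if d = 0 then n ^ 2 else 0) +
            (if d + h = 0 then n ^ 2 else 0))) :=
      Finset.sum_le_sum fun h _ => Finset.sum_le_sum fun d _ => hpair h d
    refine hb.trans (le_of_eq ?_)
    have inner : ∀ h : ZMod p, ∑ d : ZMod p, (n ^ 2 * g +
        ((if h = 0 then n ^ 2 else 0) + (if d = 0 then n ^ 2 else 0) +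
          (if d + h = 0 then n ^ 2 else 0)))
        = n * (n ^ 2 * g) + (n * (if h = 0 then n ^ 2 else 0) + n ^ 2 + n ^ 2) := by
      intro h
      rw [Finset.sum_add_distrib, Finset.sum_add_distrib, Finset.sum_add_distrib,
        hconst (n ^ 2 * g), hconst (if h = 0 then n ^ 2 else 0), I0, I1 h]
    calc ∑ h : ZMod p, ∑ d : ZMod p, (n ^ 2 * g +
          ((if h = 0 then n ^ 2 else 0) + (if d = 0 then n ^ 2 else 0) +
            (if d + h = 0 then n ^ 2 else 0)))
        = ∑ h : ZMod p, (n * (n ^ 2 * g) +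
            (n * (if h = 0 then n ^ 2 else 0) + n ^ 2 + n ^ 2)) :=
          Finset.sum_congr rfl fun h _ => inner h
      _ = n * (n * (n ^ 2 * g)) + (n * n ^ 2 + n * n ^ 2 + n * n ^ 2) := by
          rw [Finset.sum_add_distrib, Finset.sum_add_distrib, Finset.sum_add_distrib,
            hconst (n * (n ^ 2 * g)), hconst (n ^ 2), ← Finset.mul_sum, I0]
          try ring
      _ = n ^ 4 * g + 3 * n ^ 3 := by ring
  -- putting everything together
  set S : ℂ := ∑ x : ZMod p, ∑ y : ZMod p, f₀ x * f₁ (x + y) * f₂ (x + y ^ 2) with hS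
  have hA := NRAux.stepA f₀ f₁ f₂ hf₁
  rw [← hS, ← hn] at hA
  have main4 : ‖S‖ ^ 4 ≤ n ^ 4 * ∑ h : ZMod p, ∑ d : ZMod p, ‖NRAux.BB f₂ h d‖ := by
    have e1 : (∑ h : ZMod p, ‖NRAux.AA f₀ f₂ h‖) ^ 2
        ≤ n * ∑ h : ZMod p, ‖NRAux.AA f₀ f₂ h‖ ^ 2 := by
      have := NRAux.sq_sum_le (fun h : ZMod p => ‖NRAux.AA f₀ f₂ h‖)
      rwa [ZMod.card, ← hn] at this
    have e2 : ∑ h : ZMod p, ‖NRAux.AA f₀ f₂ h‖ ^ 2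
        ≤ ∑ h : ZMod p, (n * ∑ d : ZMod p, ‖NRAux.BB f₂ h d‖) := by
      refine Finset.sum_le_sum fun h _ => ?_
      have := NRAux.stepB f₀ f₂ hf₀ h
      rwa [← hn] at this
    calc ‖S‖ ^ 4 = (‖S‖ ^ 2) ^ 2 := by ring
      _ ≤ (n * ∑ h : ZMod p, ‖NRAux.AA f₀ f₂ h‖) ^ 2 :=
          pow_le_pow_left₀ (by positivity) hA 2
      _ = n ^ 2 * (∑ h : ZMod p, ‖NRAux.AA f₀ f₂ h‖) ^ 2 := by ring
      _ ≤ n ^ 2 * (n * ∑ h : ZMod p, ‖NRAux.AA f₀ f₂ h‖ ^ 2) :=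
          mul_le_mul_of_nonneg_left e1 (by positivity)
      _ ≤ n ^ 2 * (n * ∑ h : ZMod p, (n * ∑ d : ZMod p, ‖NRAux.BB f₂ h d‖)) :=
          mul_le_mul_of_nonneg_left (mul_le_mul_of_nonneg_left e2 hn0.le) (by positivity)
      _ = n ^ 4 * ∑ h : ZMod p, ∑ d : ZMod p, ‖NRAux.BB f₂ h d‖ := by
          rw [← Finset.mul_sum]; ring
  have habs : ‖S / (p : ℂ) ^ 2‖ = ‖S‖ / n ^ 2 := by
    rw [norm_div, norm_pow, Complex.norm_natCast, hn]
  rw [habs, div_pow, show ((n ^ 2) ^ 4 : ℝ) = n ^ 8 from by ring]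
  have hfinal : ‖S‖ ^ 4 / n ^ 8 ≤ g + 3 / n := by
    have h1 : ‖S‖ ^ 4 ≤ n ^ 8 * g + 3 * n ^ 7 := by
      calc ‖S‖ ^ 4 ≤ n ^ 4 * ∑ h : ZMod p, ∑ d : ZMod p, ‖NRAux.BB f₂ h d‖ := main4
        _ ≤ n ^ 4 * (n ^ 4 * g + 3 * n ^ 3) := mul_le_mul_of_nonneg_left hsum (by positivity)
        _ = n ^ 8 * g + 3 * n ^ 7 := by ring
    calc ‖S‖ ^ 4 / n ^ 8 ≤ (n ^ 8 * g + 3 * n ^ 7) / n ^ 8 := by gcongr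
      _ = g + 3 / n := by field_simp
  refine hfinal.trans ?_
  have h1n : (0 : ℝ) ≤ 1 / n := by positivity
  have h3n : (3 : ℝ) / n = 3 * (1 / n) := by ring
  linarith
end
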